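/- arXiv:1802.05681 — 6 statements merged into one kernel-verified Lean document; each statement's English description precedes it below -/
import Mathlib

section
/- Let J ≥ 1 and let B be a J×J real matrix that is a strictly diagonally dominant M-matrix, i.e., B_{ij} ≤ 0 for all i ≠ j and B_{ii} > Σ_{j≠i} |B_{ij}| for all i. Fix b, g ∈ ℝ^J and define F : ℝ^J → ℝ^J by F(x)_j = min((Bx − b)_j, x_j − g_j). Then F is inverse monotone: for all y, z ∈ ℝ^J, if F(y) ≤ F(z) componentwise, then y ≤ z componentwise. -/
/-! Let `w = y - z` and suppose `w` is somewhere positive. At an index `i` where `w` is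
maximal, the nonpositive off-diagonal entries give `(B w)_i ≥ (Σ_j B_ij) w_i`, and strict
diagonal dominance makes that row sum positive. So both `(B y - b)_i > (B z - b)_i` and
`y_i - g_i > z_i - g_i`, whence `F(y)_i > F(z)_i`. -/

namespace Matrix

variable {ι : Type*} [Fintype ι] {B : Matrix ι ι ℝ} {i : ι}

theorem sum_row_mul_le_mulVec_apply_of_le (hoff : ∀ j, j ≠ i → B i j ≤ 0) {w : ι → ℝ}
    (hmax : ∀ j, w j ≤ w i) : (∑ j, B i j) * w i ≤ (B *ᵥ w) i := by
  rw [mulVec, dotProduct, Finset.sum_mul]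
  refine Finset.sum_le_sum fun j _ => ?_
  rcases eq_or_ne j i with rfl | hji
  · exact le_rfl
  · exact mul_le_mul_of_nonpos_left (hmax j) (hoff j hji)

theorem sum_row_pos_of_diagDominant [DecidableEq ι] (hoff : ∀ j, j ≠ i → B i j ≤ 0)
    (hdiag : ∑ j ∈ Finset.univ.erase i, |B i j| < B i i) : 0 < ∑ j, B i j := by
  have hoffSum : ∑ j ∈ Finset.univ.erase i, B i j = -∑ j ∈ Finset.univ.erase i, |B i j| := by
    rw [← Finset.sum_neg_distrib]
    refine Finset.sum_congr rfl fun j hj => ?_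
    rw [abs_of_nonpos (hoff j (Finset.ne_of_mem_erase hj)), neg_neg]
  rw [← Finset.add_sum_erase _ _ (Finset.mem_univ i), hoffSum]
  linarith

end Matrix

theorem obstacle_map_inverse_monotone_general
    (J : ℕ) (B : Matrix (Fin J) (Fin J) ℝ)
    (hoff : ∀ i j, i ≠ j → B i j ≤ 0)
    (hdiag : ∀ i, ∑ j ∈ Finset.univ.erase i, |B i j| < B i i)
    (b g : Fin J → ℝ)
    (F : (Fin J → ℝ) → (Fin J → ℝ))
    (hF : ∀ x j, F x j = min ((B.mulVec x - b) j) (x j - g j))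
    (y z : Fin J → ℝ) (hyz : ∀ j, F y j ≤ F z j) :
    ∀ j, y j ≤ z j := by
  by_contra! ⟨j₀, hj₀⟩
  have : Nonempty (Fin J) := ⟨j₀⟩
  obtain ⟨i, hmax⟩ := Finite.exists_max (y - z)
  have hwi : 0 < (y - z) i := (sub_pos.2 hj₀).trans_le (hmax j₀)
  have hoffRow : ∀ j, j ≠ i → B i j ≤ 0 := fun j hji => hoff i j hji.symm
  have hBw : 0 < B.mulVec (y - z) i :=
    (mul_pos (Matrix.sum_row_pos_of_diagDominant hoffRow (hdiag i)) hwi).trans_le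
      (Matrix.sum_row_mul_le_mulVec_apply_of_le hoffRow hmax)
  rw [Matrix.mulVec_sub, Pi.sub_apply, sub_pos] at hBw
  have hFi : F z i < F y i := by
    rw [hF, hF]
    exact min_lt_min (by simpa using hBw) (by simpa using sub_pos.1 hwi)
  exact (hyz i).not_gt hFi

/-- If `B` is a strictly diagonally dominant M-matrix
(`B_{ij} ≤ 0` for `i ≠ j` and `B_{ii} > Σ_{j≠i} |B_{ij}|`), then the map
`F(x)_j = min((Bx − b)_j, x_j − g_j)` is inverse monotone. -/
theorem obstacle_map_inverse_monotone
    (J : ℕ) (hJ : 1 ≤ J) (B : Matrix (Fin J) (Fin J) ℝ)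
    (hoff : ∀ i j, i ≠ j → B i j ≤ 0)
    (hdiag : ∀ i, ∑ j ∈ Finset.univ.erase i, |B i j| < B i i)
    (b g : Fin J → ℝ)
    (F : (Fin J → ℝ) → (Fin J → ℝ))
    (hF : ∀ x j, F x j = min ((B.mulVec x - b) j) (x j - g j))
    (y z : Fin J → ℝ) (hyz : ∀ j, F y j ≤ F z j) :
    ∀ j, y j ≤ z j :=
  obstacle_map_inverse_monotone_general J B hoff hdiag b g F hF y z hyz
end

section
/- Let T > 0 and let Ω = (x_min, x_max) ⊂ ℝ. Let v : [0,T] × [x_min, x_max] → ℝ be such that the partial derivatives ∂_t v, ∂_t² v, ∂_t³ v, ∂_x v, ∂_x² v, ∂_x³ v, ∂_x⁴ v exist, and are continuous and bounded. Let σ², b, r : [0,T] × [x_min, x_max] → ℝ be bounded, twice continuously differentiable in t with bounded derivatives, and let φ, f : [0,T] × [x_min, x_max] → ℝ be twice continuously differentiable in t with bounded derivatives. Assume that v is a classical solution of the obstacle equation min(∂_t v + 𝒜v − f, v − φ − f) = 0 on (0,T) × Ω, where 𝒜v := −(1/2)σ² ∂_x² v + b ∂_x v + r v. Then there is a constant C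 ≥ 0 (depending only on the data above) such that for all τ > 0, h > 0 and all (t,x) with [t, t+τ] ⊆ [0,T] and [x−h, x+h] ⊆ [x_min, x_max], the Crank–Nicolson residual S¹(t,x) := min( (v(t+τ,x) − v(t,x))/τ + (1/2)(𝒜_h v)(t+τ,x) + (1/2)(𝒜_h v)(t,x) − f(t+τ/2, x), v(t+τ,x) − φ(t+τ,x) − f(t+τ,x) ) satisfies |S¹(t,x)| ≤ C(τ² + h²). -/
/-!
Fix `x` and write `α = ∂ₜv + 𝒜v − f`, `β = v − φ − f` along the time segment `[t, t + τ]`.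
Taylor expansion shows that the first argument of `S¹` differs from `(α t + α (t + τ)) / 2` by
`O(τ² + h²)`, and `min (α, β) = 0` on the open segment, hence by continuity at its end points,
so `α ≥ 0` there and `S¹ ≥ −O(τ² + h²)`. For the upper bound, either `β (t + τ) = O(τ²)`, or
`β` has no zero inside the segment: such a zero would be a minimum of `β ≥ 0`, hence a critical
point, and Taylor's theorem from there gives `β (t + τ) ≤ sup |∂ₜ²β| τ² / 2`. In the second case
`α = 0` on the whole segment and the first argument of `S¹` is itself `O(τ² + h²)`.
-/

open Set

/-- The centered finite-difference approximation of
`𝒜w = −(1/2)σ² ∂ₓ²w + b ∂ₓw + r w` with mesh step `h`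
(here `s2` stands for `σ²`). -/
noncomputable def Ah (s2 b r w : ℝ → ℝ → ℝ) (h t x : ℝ) : ℝ :=
  (1/2) * s2 t x * ((-(w t (x - h)) + 2 * w t x - w t (x + h)) / h^2)
    + b t x * ((w t (x + h) - w t (x - h)) / (2*h))
    + r t x * w t x

/-- `g` is bounded on `[0,T] × [xmin,xmax]`. -/
def BddOn2 (g : ℝ → ℝ → ℝ) (T xmin xmax : ℝ) : Prop :=
  ∃ M : ℝ, ∀ t ∈ Icc (0:ℝ) T, ∀ x ∈ Icc xmin xmax, |g t x| ≤ M

/-- `g` is (jointly) continuous on `[0,T] × [xmin,xmax]`. -/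
def ContOn2 (g : ℝ → ℝ → ℝ) (T xmin xmax : ℝ) : Prop :=
  ContinuousOn (fun p : ℝ × ℝ => g p.1 p.2) (Icc (0:ℝ) T ×ˢ Icc xmin xmax)

/-- `g` is twice continuously differentiable in `t` on `[0,T] × [xmin,xmax]`
with (first and second) `t`-derivatives `gt, gtt` that are continuous and
bounded. -/
def C2inT (g gt gtt : ℝ → ℝ → ℝ) (T xmin xmax : ℝ) : Prop :=
  (∀ x ∈ Icc xmin xmax, ∀ t ∈ Icc (0:ℝ) T,
    HasDerivWithinAt (fun s => g s x) (gt t x) (Icc (0:ℝ) T) t ∧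
    HasDerivWithinAt (fun s => gt s x) (gtt t x) (Icc (0:ℝ) T) t) ∧
  ContOn2 gt T xmin xmax ∧ ContOn2 gtt T xmin xmax ∧
  BddOn2 gt T xmin xmax ∧ BddOn2 gtt T xmin xmax

section Taylor

open scoped Nat

theorem abs_le_of_abs_deriv_le_mul_pow {F F' : ℝ → ℝ} {a b K : ℝ} {n : ℕ}
    (hF : ∀ s ∈ Icc a b, HasDerivWithinAt F (F' s) (Icc a b) s) (hFa : F a = 0)
    (hF' : ∀ s ∈ Icc a b, |F' s| ≤ K * (s - a) ^ n) :
    ∀ x ∈ Icc a b, |F x| ≤ K / (n + 1) * (x - a) ^ (n + 1) := by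
  have hB (s : ℝ) : HasDerivAt (fun y => K / (n + 1) * (y - a) ^ (n + 1)) (K * (s - a) ^ n) s := by
    refine ((((hasDerivAt_id s).sub_const a).pow (n + 1)).const_mul (K / (n + 1))).congr_deriv ?_
    push_cast
    field_simp
    simp
  simpa only [Real.norm_eq_abs] using image_norm_le_of_norm_deriv_right_le_deriv_boundary
    (fun s hs => (hF s hs).continuousWithinAt)
    (fun s hs => (hF s (Ico_subset_Icc_self hs)).mono_of_mem_nhdsWithin
      (Icc_mem_nhdsGE_of_mem hs))
    (by simp [hFa]) hB (fun s hs => hF' s (Ico_subset_Icc_self hs))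

theorem hasDerivAt_sub_pow_div_factorial_mul (a c s : ℝ) (k : ℕ) :
    HasDerivAt (fun u => (u - a) ^ (k + 1) / (k + 1)! * c) ((s - a) ^ k / k ! * c) s := by
  refine ((((hasDerivAt_id s).sub_const a).pow (k + 1)).div_const ((k + 1)! : ℝ)).mul_const c
    |>.congr_deriv ?_
  rw [Nat.factorial_succ]
  push_cast
  field_simp
  simp
  ring

theorem abs_sub_taylor_le {a b M : ℝ} {n : ℕ} {g : Fin (n + 1) → ℝ → ℝ}
    (hg : ∀ k : Fin n, ∀ s ∈ Icc a b, HasDerivWithinAt (g k.castSucc) (g k.succ s) (Icc a b) s)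
    (hM : ∀ s ∈ Icc a b, |g (Fin.last n) s| ≤ M) :
    ∀ x ∈ Icc a b,
      |g 0 x - ∑ k : Fin n, (x - a) ^ (k : ℕ) / (k : ℕ)! * g k.castSucc a| ≤
        M / n ! * (x - a) ^ n := by
  induction n with
  | zero => simpa using hM
  | succ n ih =>
    have hrem := ih (g := fun k => g k.succ) (fun k => hg k.succ) hM
    have hderiv : ∀ s ∈ Icc a b, HasDerivWithinAt
        (fun u => g 0 u - ∑ k : Fin (n + 1), (u - a) ^ (k : ℕ) / (k : ℕ)! * g k.castSucc a)
        (g (Fin.succ 0) s - ∑ k : Fin n, (s - a) ^ (k : ℕ) / (k : ℕ)! * g k.castSucc.succ a)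
        (Icc a b) s := by
      intro s hs
      simp only [Fin.sum_univ_succ (n := n), Fin.val_zero, Fin.val_succ, pow_zero]
      have hpoly := (hasDerivAt_const s (1 / (0 : ℕ)! * g (Fin.castSucc 0) a)).fun_add
        (HasDerivAt.fun_sum (u := Finset.univ) fun (k : Fin n) _ =>
          hasDerivAt_sub_pow_div_factorial_mul a (g k.succ.castSucc a) s k)
      exact ((hg 0 s hs).fun_sub hpoly.hasDerivWithinAt).congr_deriv
        (by simp only [zero_add, Fin.succ_castSucc])
    intro x hx
    convert abs_le_of_abs_deriv_le_mul_pow hderiv (by simp [Fin.sum_univ_succ]) hrem x hx using 1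
    rw [Nat.factorial_succ]
    push_cast
    field_simp

end Taylor

section OneDimensional

variable {g g1 g2 g3 g4 : ℝ → ℝ} {a b x M : ℝ}

theorem abs_sub_taylor₁_le
    (hg : ∀ s ∈ Icc a b, HasDerivWithinAt g (g1 s) (Icc a b) s)
    (hg1 : ∀ s ∈ Icc a b, HasDerivWithinAt g1 (g2 s) (Icc a b) s)
    (hM : ∀ s ∈ Icc a b, |g2 s| ≤ M) (hx : x ∈ Icc a b) :
    |g x - g a - (x - a) * g1 a| ≤ M / 2 * (x - a) ^ 2 := by
  have := abs_sub_taylor_le (g := ![g, g1, g2])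
    (by intro k; fin_cases k; exacts [hg, hg1]) hM x hx
  norm_num [Fin.sum_univ_succ, sub_sub, add_assoc] at this ⊢
  exact this

theorem abs_sub_taylor₂_le
    (hg : ∀ s ∈ Icc a b, HasDerivWithinAt g (g1 s) (Icc a b) s)
    (hg1 : ∀ s ∈ Icc a b, HasDerivWithinAt g1 (g2 s) (Icc a b) s)
    (hg2 : ∀ s ∈ Icc a b, HasDerivWithinAt g2 (g3 s) (Icc a b) s)
    (hM : ∀ s ∈ Icc a b, |g3 s| ≤ M) (hx : x ∈ Icc a b) :
    |g x - g a - (x - a) * g1 a - (x - a) ^ 2 / 2 * g2 a| ≤ M / 6 * (x - a) ^ 3 := by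
  have := abs_sub_taylor_le (g := ![g, g1, g2, g3])
    (by intro k; fin_cases k; exacts [hg, hg1, hg2]) hM x hx
  norm_num [Fin.sum_univ_succ, Nat.factorial, sub_sub, add_assoc] at this ⊢
  exact this

theorem abs_sub_taylor₃_le
    (hg : ∀ s ∈ Icc a b, HasDerivWithinAt g (g1 s) (Icc a b) s)
    (hg1 : ∀ s ∈ Icc a b, HasDerivWithinAt g1 (g2 s) (Icc a b) s)
    (hg2 : ∀ s ∈ Icc a b, HasDerivWithinAt g2 (g3 s) (Icc a b) s)
    (hg3 : ∀ s ∈ Icc a b, HasDerivWithinAt g3 (g4 s) (Icc a b) s)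
    (hM : ∀ s ∈ Icc a b, |g4 s| ≤ M) (hx : x ∈ Icc a b) :
    |g x - g a - (x - a) * g1 a - (x - a) ^ 2 / 2 * g2 a - (x - a) ^ 3 / 6 * g3 a| ≤
      M / 24 * (x - a) ^ 4 := by
  have := abs_sub_taylor_le (g := ![g, g1, g2, g3, g4])
    (by intro k; fin_cases k; exacts [hg, hg1, hg2, hg3]) hM x hx
  norm_num [Fin.sum_univ_succ, Nat.factorial, sub_sub, add_assoc] at this ⊢
  exact this

theorem abs_slope_sub_avg_deriv_le {t τ : ℝ} (hτ : 0 < τ)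
    (hg : ∀ s ∈ Icc t (t + τ), HasDerivWithinAt g (g1 s) (Icc t (t + τ)) s)
    (hg1 : ∀ s ∈ Icc t (t + τ), HasDerivWithinAt g1 (g2 s) (Icc t (t + τ)) s)
    (hg2 : ∀ s ∈ Icc t (t + τ), HasDerivWithinAt g2 (g3 s) (Icc t (t + τ)) s)
    (hM : ∀ s ∈ Icc t (t + τ), |g3 s| ≤ M) :
    |(g (t + τ) - g t) / τ - (g1 t + g1 (t + τ)) / 2| ≤ M * τ ^ 2 := by
  have hend : t + τ ∈ Icc t (t + τ) := right_mem_Icc.2 (by linarith)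
  have hM0 : 0 ≤ M := (abs_nonneg _).trans (hM _ hend)
  have h2 := abs_sub_taylor₂_le hg hg1 hg2 hM hend
  have h1 := abs_sub_taylor₁_le hg1 hg2 hM hend
  simp only [add_sub_cancel_left] at h1 h2
  set R₂ := g (t + τ) - g t - τ * g1 t - τ ^ 2 / 2 * g2 t
  set R₁ := g1 (t + τ) - g1 t - τ * g2 t
  have key : (g (t + τ) - g t) / τ - (g1 t + g1 (t + τ)) / 2 = R₂ / τ - R₁ / 2 := by
    field_simp
    ring
  calc |(g (t + τ) - g t) / τ - (g1 t + g1 (t + τ)) / 2|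
      = |R₂ / τ - R₁ / 2| := by rw [key]
    _ ≤ |R₂ / τ| + |R₁ / 2| := abs_sub _ _
    _ = |R₂| / τ + |R₁| / 2 := by rw [abs_div, abs_div, abs_of_pos hτ, abs_two]
    _ ≤ M / 6 * τ ^ 3 / τ + M / 2 * τ ^ 2 / 2 := by gcongr
    _ ≤ M * τ ^ 2 := by
        field_simp
        nlinarith [mul_nonneg hM0 (sq_nonneg τ)]

theorem abs_midpoint_sub_avg_le {t τ : ℝ} (hτ : 0 < τ)
    (hg : ∀ s ∈ Icc t (t + τ), HasDerivWithinAt g (g1 s) (Icc t (t + τ)) s)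
    (hg1 : ∀ s ∈ Icc t (t + τ), HasDerivWithinAt g1 (g2 s) (Icc t (t + τ)) s)
    (hM : ∀ s ∈ Icc t (t + τ), |g2 s| ≤ M) :
    |g (t + τ / 2) - (g t + g (t + τ)) / 2| ≤ M * τ ^ 2 := by
  have hend : t + τ ∈ Icc t (t + τ) := right_mem_Icc.2 (by linarith)
  have hM0 : 0 ≤ M := (abs_nonneg _).trans (hM _ hend)
  have h1 := abs_sub_taylor₁_le hg hg1 hM hend
  have hmid := abs_sub_taylor₁_le hg hg1 hM (⟨by linarith, by linarith⟩ : t + τ / 2 ∈ Icc t (t + τ))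
  simp only [add_sub_cancel_left] at h1 hmid
  rw [abs_le] at h1 hmid ⊢
  constructor <;> nlinarith [mul_nonneg hM0 (sq_nonneg τ)]

theorem abs_central_diff_sub_deriv_le {h : ℝ} (hh : 0 < h)
    (hg : ∀ y ∈ Icc (x - h) (x + h), HasDerivWithinAt g (g1 y) (Icc (x - h) (x + h)) y)
    (hg1 : ∀ y ∈ Icc (x - h) (x + h), HasDerivWithinAt g1 (g2 y) (Icc (x - h) (x + h)) y)
    (hg2 : ∀ y ∈ Icc (x - h) (x + h), HasDerivWithinAt g2 (g3 y) (Icc (x - h) (x + h)) y)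
    (hM : ∀ y ∈ Icc (x - h) (x + h), |g3 y| ≤ M) :
    |(g (x + h) - g (x - h)) / (2 * h) - g1 x| ≤ 2 * M * h ^ 2 := by
  have hend : x + h ∈ Icc (x - h) (x + h) := right_mem_Icc.2 (by linarith)
  have hmid : x ∈ Icc (x - h) (x + h) := ⟨by linarith, by linarith⟩
  have hM0 : 0 ≤ M := (abs_nonneg _).trans (hM _ hend)
  have h2 := abs_sub_taylor₂_le hg hg1 hg2 hM hend
  have h1 := abs_sub_taylor₁_le hg1 hg2 hM hmid
  rw [show x + h - (x - h) = 2 * h by ring] at h2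
  rw [show x - (x - h) = h by ring] at h1
  set R₂ := g (x + h) - g (x - h) - 2 * h * g1 (x - h) - (2 * h) ^ 2 / 2 * g2 (x - h)
  set R₁ := g1 x - g1 (x - h) - h * g2 (x - h)
  have key : (g (x + h) - g (x - h)) / (2 * h) - g1 x = R₂ / (2 * h) - R₁ := by
    field_simp
    ring
  calc |(g (x + h) - g (x - h)) / (2 * h) - g1 x|
      = |R₂ / (2 * h) - R₁| := by rw [key]
    _ ≤ |R₂ / (2 * h)| + |R₁| := abs_sub _ _
    _ = |R₂| / (2 * h) + |R₁| := by rw [abs_div, abs_of_pos (by positivity : 0 < 2 * h)]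
    _ ≤ M / 6 * (2 * h) ^ 3 / (2 * h) + M / 2 * h ^ 2 := by gcongr
    _ ≤ 2 * M * h ^ 2 := by
        field_simp
        nlinarith [mul_nonneg hM0 (sq_nonneg h)]

theorem abs_second_central_diff_add_le {h : ℝ} (hh : 0 < h)
    (hg : ∀ y ∈ Icc (x - h) (x + h), HasDerivWithinAt g (g1 y) (Icc (x - h) (x + h)) y)
    (hg1 : ∀ y ∈ Icc (x - h) (x + h), HasDerivWithinAt g1 (g2 y) (Icc (x - h) (x + h)) y)
    (hg2 : ∀ y ∈ Icc (x - h) (x + h), HasDerivWithinAt g2 (g3 y) (Icc (x - h) (x + h)) y)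
    (hg3 : ∀ y ∈ Icc (x - h) (x + h), HasDerivWithinAt g3 (g4 y) (Icc (x - h) (x + h)) y)
    (hM : ∀ y ∈ Icc (x - h) (x + h), |g4 y| ≤ M) :
    |(-(g (x - h)) + 2 * g x - g (x + h)) / h ^ 2 + g2 x| ≤ 2 * M * h ^ 2 := by
  have hend : x + h ∈ Icc (x - h) (x + h) := right_mem_Icc.2 (by linarith)
  have hmid : x ∈ Icc (x - h) (x + h) := ⟨by linarith, by linarith⟩
  have hM0 : 0 ≤ M := (abs_nonneg _).trans (hM _ hend)
  have h3end := abs_sub_taylor₃_le hg hg1 hg2 hg3 hM hend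
  have h3mid := abs_sub_taylor₃_le hg hg1 hg2 hg3 hM hmid
  have h1 := abs_sub_taylor₁_le hg2 hg3 hM hmid
  rw [show x + h - (x - h) = 2 * h by ring] at h3end
  rw [show x - (x - h) = h by ring] at h3mid h1
  set R₃ := g (x + h) - g (x - h) - 2 * h * g1 (x - h) - (2 * h) ^ 2 / 2 * g2 (x - h) -
    (2 * h) ^ 3 / 6 * g3 (x - h)
  set R₃' := g x - g (x - h) - h * g1 (x - h) - h ^ 2 / 2 * g2 (x - h) - h ^ 3 / 6 * g3 (x - h)
  set R₁ := g2 x - g2 (x - h) - h * g3 (x - h)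
  have key : (-(g (x - h)) + 2 * g x - g (x + h)) / h ^ 2 + g2 x = (2 * R₃' - R₃) / h ^ 2 + R₁ := by
    field_simp
    ring
  calc |(-(g (x - h)) + 2 * g x - g (x + h)) / h ^ 2 + g2 x|
      = |(2 * R₃' - R₃) / h ^ 2 + R₁| := by rw [key]
    _ ≤ |(2 * R₃' - R₃) / h ^ 2| + |R₁| := abs_add_le _ _
    _ ≤ (2 * |R₃'| + |R₃|) / h ^ 2 + |R₁| := by
        rw [abs_div, abs_of_pos (by positivity : 0 < h ^ 2)]
        gcongr
        exact (abs_sub _ _).trans_eq (by rw [abs_mul, abs_two])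
    _ ≤ (2 * (M / 24 * h ^ 4) + M / 24 * (2 * h) ^ 4) / h ^ 2 + M / 2 * h ^ 2 := by gcongr
    _ ≤ 2 * M * h ^ 2 := by
        field_simp
        nlinarith [mul_nonneg hM0 (pow_nonneg hh.le 4)]

end OneDimensional

theorem eqOn_Icc_of_eqOn_Ioo {F : ℝ → ℝ} {u v c : ℝ} (huv : u < v)
    (hF : ContinuousOn F (Icc u v)) (h : EqOn F (fun _ => c) (Ioo u v)) :
    EqOn F (fun _ => c) (Icc u v) :=
  Set.EqOn.of_subset_closure h hF continuousOn_const Ioo_subset_Icc_self (closure_Ioo huv.ne).ge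

theorem IsLocalMin.le_add_half_mul_sq {β β' β'' : ℝ → ℝ} {s u K : ℝ} (hmin : IsLocalMin β s)
    (hβs : HasDerivAt β (β' s) s)
    (hβ : ∀ y ∈ Icc s u, HasDerivWithinAt β (β' y) (Icc s u) y)
    (hβ' : ∀ y ∈ Icc s u, HasDerivWithinAt β' (β'' y) (Icc s u) y)
    (hK : ∀ y ∈ Icc s u, |β'' y| ≤ K) (hsu : s ≤ u) :
    β u ≤ β s + K / 2 * (u - s) ^ 2 := by
  have hcrit : β' s = 0 := hmin.hasDerivAt_eq_zero hβs
  have := abs_sub_taylor₁_le hβ hβ' hK (right_mem_Icc.2 hsu)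
  rw [hcrit, mul_zero, sub_zero] at this
  linarith [le_abs_self (β u - β s)]

theorem abs_min_le_of_min_eq_zero {α β β' β'' : ℝ → ℝ} {t u A ε K : ℝ} (htu : t < u)
    (hα : ContinuousOn α (Icc t u))
    (hβ : ∀ s ∈ Icc t u, HasDerivWithinAt β (β' s) (Icc t u) s)
    (hβ' : ∀ s ∈ Icc t u, HasDerivWithinAt β' (β'' s) (Icc t u) s)
    (hK : ∀ s ∈ Icc t u, |β'' s| ≤ K)
    (hmin : ∀ s ∈ Ioo t u, min (α s) (β s) = 0)
    (hA : |A - (α t + α u) / 2| ≤ ε) :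
    |min A (β u)| ≤ ε + K / 2 * (u - t) ^ 2 := by
  have ht : t ∈ Icc t u := left_mem_Icc.2 htu.le
  have hu : u ∈ Icc t u := right_mem_Icc.2 htu.le
  have hK0 : 0 ≤ K := (abs_nonneg _).trans (hK t ht)
  have hε0 : 0 ≤ ε := (abs_nonneg _).trans hA
  have hquad : 0 ≤ K / 2 * (u - t) ^ 2 := by positivity
  have hmin_Icc := eqOn_Icc_of_eqOn_Ioo htu
    (hα.inf fun s hs => (hβ s hs).continuousWithinAt) hmin
  have hαt : 0 ≤ α t := (hmin_Icc ht).symm.le.trans (min_le_left _ _)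
  have hαu : 0 ≤ α u := (hmin_Icc hu).symm.le.trans (min_le_left _ _)
  have hβu : 0 ≤ β u := (hmin_Icc hu).symm.le.trans (min_le_right _ _)
  obtain ⟨hA₁, hA₂⟩ := abs_le.1 hA
  rw [abs_le]
  refine ⟨le_min (by linarith) (by linarith), ?_⟩
  by_cases hsmall : β u ≤ K / 2 * (u - t) ^ 2
  · exact (min_le_right _ _).trans (by linarith)
  have hβpos : ∀ s ∈ Ioo t u, 0 < β s := by
    intro s hs
    by_contra! hβs
    have hβs0 : β s = 0 := le_antisymm hβs ((hmin s hs).symm.le.trans (min_le_right _ _))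
    have hloc : IsLocalMin β s := by
      filter_upwards [Ioo_mem_nhds hs.1 hs.2] with y hy
      exact hβs0.le.trans ((hmin y hy).symm.le.trans (min_le_right _ _))
    have hsub : Icc s u ⊆ Icc t u := Icc_subset_Icc_left hs.1.le
    have hgrowth := hloc.le_add_half_mul_sq ((hβ s (Ioo_subset_Icc_self hs)).hasDerivAt
        (Icc_mem_nhds hs.1 hs.2)) (fun y hy => (hβ y (hsub hy)).mono hsub)
      (fun y hy => (hβ' y (hsub hy)).mono hsub) (fun y hy => hK y (hsub hy)) hs.2.le
    have : K / 2 * (u - s) ^ 2 ≤ K / 2 * (u - t) ^ 2 := by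
      gcongr <;> linarith [hs.1, hs.2]
    linarith
  have hα0 := eqOn_Icc_of_eqOn_Ioo htu hα fun s hs =>
    (min_eq_iff.1 (hmin s hs)).elim And.left fun h => absurd h.1 (hβpos s hs).ne'
  have hαt0 : α t = 0 := hα0 ht
  have hαu0 : α u = 0 := hα0 hu
  exact (min_le_left _ _).trans (by linarith)

section Rectangle

variable {T xmin xmax : ℝ}

def HasDerivInT (g g' : ℝ → ℝ → ℝ) (T xmin xmax : ℝ) : Prop :=
  ∀ x ∈ Icc xmin xmax, ∀ t ∈ Icc (0:ℝ) T,
    HasDerivWithinAt (fun s => g s x) (g' t x) (Icc (0:ℝ) T) t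

def HasDerivInX (g g' : ℝ → ℝ → ℝ) (T xmin xmax : ℝ) : Prop :=
  ∀ t ∈ Icc (0:ℝ) T, ∀ x ∈ Icc xmin xmax,
    HasDerivWithinAt (fun y => g t y) (g' t x) (Icc xmin xmax) x

/-- The operator `𝒜` applied to `v`, given `vx = ∂ₓv` and `vxx = ∂ₓ²v`. -/
noncomputable def Aop (s2 b r v vx vxx : ℝ → ℝ → ℝ) (t x : ℝ) : ℝ :=
  -(1/2) * s2 t x * vxx t x + b t x * vx t x + r t x * v t x

theorem BddOn2.exists_nonneg {g : ℝ → ℝ → ℝ} (hg : BddOn2 g T xmin xmax) :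
    ∃ M, 0 ≤ M ∧ ∀ t ∈ Icc (0:ℝ) T, ∀ x ∈ Icc xmin xmax, |g t x| ≤ M := by
  obtain ⟨M, hM⟩ := hg
  exact ⟨max M 0, le_max_right _ _, fun t ht x hx => (hM t ht x hx).trans (le_max_left _ _)⟩

theorem BddOn2.sub {g k : ℝ → ℝ → ℝ} (hg : BddOn2 g T xmin xmax) (hk : BddOn2 k T xmin xmax) :
    BddOn2 (g - k) T xmin xmax := by
  obtain ⟨M, hM⟩ := hg
  obtain ⟨N, hN⟩ := hk
  exact ⟨M + N, fun t ht x hx => (abs_sub _ _).trans (add_le_add (hM t ht x hx) (hN t ht x hx))⟩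

theorem ContOn2.continuousOn_slice {g : ℝ → ℝ → ℝ} (hg : ContOn2 g T xmin xmax) {x : ℝ}
    (hx : x ∈ Icc xmin xmax) : ContinuousOn (fun s => g s x) (Icc (0:ℝ) T) :=
  hg.comp (Continuous.prodMk_left x).continuousOn fun _ hs => ⟨hs, hx⟩

theorem HasDerivInT.sub {g g' k k' : ℝ → ℝ → ℝ} (hg : HasDerivInT g g' T xmin xmax)
    (hk : HasDerivInT k k' T xmin xmax) : HasDerivInT (g - k) (g' - k') T xmin xmax :=
  fun x hx t ht => (hg x hx t ht).sub (hk x hx t ht)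

theorem HasDerivInT.continuousOn_slice {g g' : ℝ → ℝ → ℝ} (hg : HasDerivInT g g' T xmin xmax)
    {x : ℝ} (hx : x ∈ Icc xmin xmax) : ContinuousOn (fun s => g s x) (Icc (0:ℝ) T) :=
  fun t ht => (hg x hx t ht).continuousWithinAt

theorem HasDerivInT.slice {g g' : ℝ → ℝ → ℝ} (hg : HasDerivInT g g' T xmin xmax) {x t u : ℝ}
    (hx : x ∈ Icc xmin xmax) (htu : Icc t u ⊆ Icc (0:ℝ) T) :
    ∀ s ∈ Icc t u, HasDerivWithinAt (fun s => g s x) (g' s x) (Icc t u) s :=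
  fun s hs => (hg x hx s (htu hs)).mono htu

theorem HasDerivInX.slice {g g' : ℝ → ℝ → ℝ} (hg : HasDerivInX g g' T xmin xmax) {t x h : ℝ}
    (ht : t ∈ Icc (0:ℝ) T) (hxh : Icc (x - h) (x + h) ⊆ Icc xmin xmax) :
    ∀ y ∈ Icc (x - h) (x + h), HasDerivWithinAt (fun y => g t y) (g' t y) (Icc (x - h) (x + h)) y :=
  fun y hy => (hg t ht y (hxh hy)).mono hxh

theorem C2inT.hasDerivInT {g gt gtt : ℝ → ℝ → ℝ} (hg : C2inT g gt gtt T xmin xmax) :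
    HasDerivInT g gt T xmin xmax :=
  fun x hx t ht => (hg.1 x hx t ht).1

theorem C2inT.hasDerivInT_deriv {g gt gtt : ℝ → ℝ → ℝ} (hg : C2inT g gt gtt T xmin xmax) :
    HasDerivInT gt gtt T xmin xmax :=
  fun x hx t ht => (hg.1 x hx t ht).2

theorem exists_abs_Ah_sub_Aop_le {v vx vxx vx3 vx4 s2 b r : ℝ → ℝ → ℝ}
    (hv : HasDerivInX v vx T xmin xmax) (hvx : HasDerivInX vx vxx T xmin xmax)
    (hvxx : HasDerivInX vxx vx3 T xmin xmax) (hvx3 : HasDerivInX vx3 vx4 T xmin xmax)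
    (hvx3b : BddOn2 vx3 T xmin xmax) (hvx4b : BddOn2 vx4 T xmin xmax)
    (hs2 : BddOn2 s2 T xmin xmax) (hb : BddOn2 b T xmin xmax) :
    ∃ C, 0 ≤ C ∧ ∀ h t x, 0 < h → t ∈ Icc (0:ℝ) T → Icc (x - h) (x + h) ⊆ Icc xmin xmax →
      |Ah s2 b r v h t x - Aop s2 b r v vx vxx t x| ≤ C * h ^ 2 := by
  obtain ⟨M₃, hM₃0, hM₃⟩ := hvx3b.exists_nonneg
  obtain ⟨M₄, hM₄0, hM₄⟩ := hvx4b.exists_nonneg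
  obtain ⟨S, hS0, hS⟩ := hs2.exists_nonneg
  obtain ⟨B, hB0, hB⟩ := hb.exists_nonneg
  refine ⟨S * M₄ + 2 * B * M₃, by positivity, fun h t x hh ht hxh => ?_⟩
  have hx : x ∈ Icc xmin xmax := hxh ⟨by linarith, by linarith⟩
  have hD₂ := abs_second_central_diff_add_le hh (hv.slice ht hxh) (hvx.slice ht hxh)
    (hvxx.slice ht hxh) (hvx3.slice ht hxh) fun y hy => hM₄ t ht y (hxh hy)
  have hD₁ := abs_central_diff_sub_deriv_le hh (hv.slice ht hxh) (hvx.slice ht hxh)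
    (hvxx.slice ht hxh) fun y hy => hM₃ t ht y (hxh hy)
  have key : Ah s2 b r v h t x - Aop s2 b r v vx vxx t x =
      1 / 2 * s2 t x * ((-(v t (x - h)) + 2 * v t x - v t (x + h)) / h ^ 2 + vxx t x) +
        b t x * ((v t (x + h) - v t (x - h)) / (2 * h) - vx t x) := by
    simp only [Ah, Aop]
    ring
  calc |Ah s2 b r v h t x - Aop s2 b r v vx vxx t x|
      ≤ 1 / 2 * |s2 t x| * |(-(v t (x - h)) + 2 * v t x - v t (x + h)) / h ^ 2 + vxx t x| +
        |b t x| * |(v t (x + h) - v t (x - h)) / (2 * h) - vx t x| := by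
        rw [key]
        refine (abs_add_le _ _).trans_eq ?_
        rw [abs_mul, abs_mul, abs_mul, abs_of_pos (by norm_num : (0:ℝ) < 1 / 2)]
    _ ≤ 1 / 2 * S * (2 * M₄ * h ^ 2) + B * (2 * M₃ * h ^ 2) := by
        gcongr
        exacts [hS t ht x hx, hB t ht x hx]
    _ = (S * M₄ + 2 * B * M₃) * h ^ 2 := by ring

theorem exists_abs_CN_sub_avg_le {v vt vtt vttt vx vxx vx3 vx4 s2 b r f ft ftt : ℝ → ℝ → ℝ}
    (hv : HasDerivInT v vt T xmin xmax) (hvt : HasDerivInT vt vtt T xmin xmax)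
    (hvtt : HasDerivInT vtt vttt T xmin xmax) (hvttt : BddOn2 vttt T xmin xmax)
    (hvx : HasDerivInX v vx T xmin xmax) (hvxx : HasDerivInX vx vxx T xmin xmax)
    (hvx3 : HasDerivInX vxx vx3 T xmin xmax) (hvx4 : HasDerivInX vx3 vx4 T xmin xmax)
    (hvx3b : BddOn2 vx3 T xmin xmax) (hvx4b : BddOn2 vx4 T xmin xmax)
    (hs2 : BddOn2 s2 T xmin xmax) (hb : BddOn2 b T xmin xmax)
    (hf : HasDerivInT f ft T xmin xmax) (hft : HasDerivInT ft ftt T xmin xmax)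
    (hftt : BddOn2 ftt T xmin xmax) :
    ∃ C, 0 ≤ C ∧ ∀ τ h t x, 0 < τ → 0 < h →
      Icc t (t + τ) ⊆ Icc (0:ℝ) T → Icc (x - h) (x + h) ⊆ Icc xmin xmax →
      |((v (t + τ) x - v t x) / τ + (1/2) * Ah s2 b r v h (t + τ) x
          + (1/2) * Ah s2 b r v h t x - f (t + τ/2) x)
        - ((vt t x + Aop s2 b r v vx vxx t x - f t x)
          + (vt (t + τ) x + Aop s2 b r v vx vxx (t + τ) x - f (t + τ) x)) / 2|
        ≤ C * (τ ^ 2 + h ^ 2) := by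
  obtain ⟨Mv, hMv0, hMv⟩ := hvttt.exists_nonneg
  obtain ⟨Mf, hMf0, hMf⟩ := hftt.exists_nonneg
  obtain ⟨Cx, hCx, hAh⟩ := exists_abs_Ah_sub_Aop_le (r := r) hvx hvxx hvx3 hvx4 hvx3b hvx4b hs2 hb
  refine ⟨Mv + Mf + Cx, by positivity, fun τ h t x hτ hh htT hxh => ?_⟩
  have ht : t ∈ Icc (0:ℝ) T := htT (left_mem_Icc.2 (by linarith))
  have htτ : t + τ ∈ Icc (0:ℝ) T := htT (right_mem_Icc.2 (by linarith))
  have hx : x ∈ Icc xmin xmax := hxh ⟨by linarith, by linarith⟩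
  have h₁ := abs_slope_sub_avg_deriv_le hτ (hv.slice hx htT) (hvt.slice hx htT)
    (hvtt.slice hx htT) fun s hs => hMv s (htT hs) x hx
  have h₂ := abs_midpoint_sub_avg_le hτ (hf.slice hx htT) (hft.slice hx htT)
    fun s hs => hMf s (htT hs) x hx
  have h₃ := hAh h t x hh ht hxh
  have h₄ := hAh h (t + τ) x hh htτ hxh
  rw [abs_le] at h₁ h₂ h₃ h₄ ⊢
  constructor <;> nlinarith [mul_nonneg hMv0 (sq_nonneg h), mul_nonneg hMf0 (sq_nonneg h),
    mul_nonneg hCx (sq_nonneg τ)]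

theorem continuousOn_Aop_slice {v vt vx vxx s2 b r : ℝ → ℝ → ℝ} {x : ℝ}
    (hv : HasDerivInT v vt T xmin xmax) (hvx : ContOn2 vx T xmin xmax)
    (hvxx : ContOn2 vxx T xmin xmax) (hs2 : ∃ s2t s2tt, C2inT s2 s2t s2tt T xmin xmax)
    (hb : ∃ bt btt, C2inT b bt btt T xmin xmax) (hr : ∃ rt rtt, C2inT r rt rtt T xmin xmax)
    (hx : x ∈ Icc xmin xmax) :
    ContinuousOn (fun s => Aop s2 b r v vx vxx s x) (Icc (0:ℝ) T) := by
  obtain ⟨_, _, hs2⟩ := hs2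
  obtain ⟨_, _, hb⟩ := hb
  obtain ⟨_, _, hr⟩ := hr
  exact ((continuousOn_const.mul (hs2.hasDerivInT.continuousOn_slice hx)).mul
    (hvxx.continuousOn_slice hx)).add ((hb.hasDerivInT.continuousOn_slice hx).mul
    (hvx.continuousOn_slice hx)) |>.add ((hr.hasDerivInT.continuousOn_slice hx).mul
    (hv.continuousOn_slice hx))

end Rectangle

theorem CN_obstacle_residual_second_order_general
    (T xmin xmax : ℝ)
    (v vt vtt vttt vx vxx vx3 vx4 s2 b r φ f : ℝ → ℝ → ℝ)
    -- the first three partial t-derivatives of v exist on [0,T]×[xmin,xmax]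
    (hvt : ∀ x ∈ Icc xmin xmax, ∀ t ∈ Icc (0:ℝ) T,
      HasDerivWithinAt (fun s => v s x) (vt t x) (Icc (0:ℝ) T) t)
    (hvtt : ∀ x ∈ Icc xmin xmax, ∀ t ∈ Icc (0:ℝ) T,
      HasDerivWithinAt (fun s => vt s x) (vtt t x) (Icc (0:ℝ) T) t)
    (hvttt : ∀ x ∈ Icc xmin xmax, ∀ t ∈ Icc (0:ℝ) T,
      HasDerivWithinAt (fun s => vtt s x) (vttt t x) (Icc (0:ℝ) T) t)
    -- the first four partial x-derivatives of v exist on [0,T]×[xmin,xmax]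
    (hvx : ∀ t ∈ Icc (0:ℝ) T, ∀ x ∈ Icc xmin xmax,
      HasDerivWithinAt (fun y => v t y) (vx t x) (Icc xmin xmax) x)
    (hvxx : ∀ t ∈ Icc (0:ℝ) T, ∀ x ∈ Icc xmin xmax,
      HasDerivWithinAt (fun y => vx t y) (vxx t x) (Icc xmin xmax) x)
    (hvx3 : ∀ t ∈ Icc (0:ℝ) T, ∀ x ∈ Icc xmin xmax,
      HasDerivWithinAt (fun y => vxx t y) (vx3 t x) (Icc xmin xmax) x)
    (hvx4 : ∀ t ∈ Icc (0:ℝ) T, ∀ x ∈ Icc xmin xmax,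
      HasDerivWithinAt (fun y => vx3 t y) (vx4 t x) (Icc xmin xmax) x)
    -- the partial derivatives are continuous
    (hcont : ContOn2 vt T xmin xmax ∧ ContOn2 vtt T xmin xmax ∧
      ContOn2 vttt T xmin xmax ∧ ContOn2 vx T xmin xmax ∧
      ContOn2 vxx T xmin xmax ∧ ContOn2 vx3 T xmin xmax ∧ ContOn2 vx4 T xmin xmax)
    -- the partial derivatives are bounded
    (hbdd : BddOn2 vt T xmin xmax ∧ BddOn2 vtt T xmin xmax ∧
      BddOn2 vttt T xmin xmax ∧ BddOn2 vx T xmin xmax ∧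
      BddOn2 vxx T xmin xmax ∧ BddOn2 vx3 T xmin xmax ∧ BddOn2 vx4 T xmin xmax)
    -- σ², b, r are bounded and C² in t with bounded derivatives
    (hs2 : BddOn2 s2 T xmin xmax ∧ ∃ s2t s2tt, C2inT s2 s2t s2tt T xmin xmax)
    (hbcoef : BddOn2 b T xmin xmax ∧ ∃ bt btt, C2inT b bt btt T xmin xmax)
    (hrcoef : BddOn2 r T xmin xmax ∧ ∃ rt rtt, C2inT r rt rtt T xmin xmax)
    -- φ and f are C² in t with bounded derivatives
    (hφ : ∃ φt φtt, C2inT φ φt φtt T xmin xmax)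
    (hf : ∃ ft ftt, C2inT f ft ftt T xmin xmax)
    -- v is a classical solution of the obstacle equation on (0,T) × Ω
    (hPDE : ∀ t ∈ Ioo (0:ℝ) T, ∀ x ∈ Ioo xmin xmax,
      min (vt t x + (-(1/2) * s2 t x * vxx t x + b t x * vx t x + r t x * v t x)
            - f t x)
          (v t x - φ t x - f t x) = 0) :
    ∃ C : ℝ, 0 ≤ C ∧
      ∀ τ h t x : ℝ, 0 < τ → 0 < h →
        Icc t (t + τ) ⊆ Icc (0:ℝ) T → Icc (x - h) (x + h) ⊆ Icc xmin xmax →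
        |min ((v (t + τ) x - v t x) / τ
              + (1/2) * Ah s2 b r v h (t + τ) x + (1/2) * Ah s2 b r v h t x
              - f (t + τ/2) x)
             (v (t + τ) x - φ (t + τ) x - f (t + τ) x)|
          ≤ C * (τ^2 + h^2) := by
  obtain ⟨hvt_cont, -, -, hvx_cont, hvxx_cont, -, -⟩ := hcont
  obtain ⟨-, hvtt_bdd, hvttt_bdd, -, -, hvx3_bdd, hvx4_bdd⟩ := hbdd
  obtain ⟨φt, φtt, hφ⟩ := hφ
  obtain ⟨ft, ftt, hf⟩ := hf
  obtain ⟨C, hC, hCN⟩ := exists_abs_CN_sub_avg_le (r := r) hvt hvtt hvttt hvttt_bdd hvx hvxx hvx3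
    hvx4 hvx3_bdd hvx4_bdd hs2.1 hbcoef.1 hf.hasDerivInT hf.hasDerivInT_deriv hf.2.2.2.2
  obtain ⟨K, hK, hβ''⟩ := ((hvtt_bdd.sub hφ.2.2.2.2).sub hf.2.2.2.2).exists_nonneg
  refine ⟨C + K, by positivity, fun τ h t x hτ hh htT hxh => ?_⟩
  have ht : t ∈ Icc (0:ℝ) T := htT (left_mem_Icc.2 (by linarith))
  have htτ : t + τ ∈ Icc (0:ℝ) T := htT (right_mem_Icc.2 (by linarith))
  have hxo : x ∈ Ioo xmin xmax :=
    ⟨(hxh (left_mem_Icc.2 (by linarith))).1.trans_lt (by linarith),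
      (hxh (right_mem_Icc.2 (by linarith))).2.trans_lt' (by linarith)⟩
  have hx := Ioo_subset_Icc_self hxo
  have hα : ContinuousOn (fun s => vt s x + Aop s2 b r v vx vxx s x - f s x) (Icc 0 T) :=
    ((hvt_cont.continuousOn_slice hx).add (continuousOn_Aop_slice hvt hvx_cont hvxx_cont
      hs2.2 hbcoef.2 hrcoef.2 hx)).sub (hf.hasDerivInT.continuousOn_slice hx)
  calc _ ≤ _ := abs_min_le_of_min_eq_zero (lt_add_of_pos_right t hτ) (hα.mono htT)
        (((HasDerivInT.sub hvt hφ.hasDerivInT).sub hf.hasDerivInT).slice hx htT)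
        (((HasDerivInT.sub hvtt hφ.hasDerivInT_deriv).sub hf.hasDerivInT_deriv).slice hx htT)
        (fun s hs => hβ'' s (htT hs) x hx)
        (fun s hs => hPDE s ⟨ht.1.trans_lt hs.1, hs.2.trans_le htτ.2⟩ x hxo)
        (hCN τ h t x hτ hh htT hxh)
    _ ≤ (C + K) * (τ ^ 2 + h ^ 2) := by
      rw [add_sub_cancel_left]
      nlinarith [mul_nonneg hK (sq_nonneg τ), mul_nonneg hK (sq_nonneg h)]

/-- Second-order consistency (in time and space) of the
Crank–Nicolson residual `S¹` for a classical solution `v` of the obstacle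
equation `min(∂ₜv + 𝒜v − f, v − φ − f) = 0`:
`|S¹(t,x)| ≤ C(τ² + h²)`. -/
theorem CN_obstacle_residual_second_order
    (T xmin xmax : ℝ) (hT : 0 < T) (hx : xmin < xmax)
    (v vt vtt vttt vx vxx vx3 vx4 s2 b r φ f : ℝ → ℝ → ℝ)
    -- the first three partial t-derivatives of v exist on [0,T]×[xmin,xmax]
    (hvt : ∀ x ∈ Icc xmin xmax, ∀ t ∈ Icc (0:ℝ) T,
      HasDerivWithinAt (fun s => v s x) (vt t x) (Icc (0:ℝ) T) t)
    (hvtt : ∀ x ∈ Icc xmin xmax, ∀ t ∈ Icc (0:ℝ) T,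
      HasDerivWithinAt (fun s => vt s x) (vtt t x) (Icc (0:ℝ) T) t)
    (hvttt : ∀ x ∈ Icc xmin xmax, ∀ t ∈ Icc (0:ℝ) T,
      HasDerivWithinAt (fun s => vtt s x) (vttt t x) (Icc (0:ℝ) T) t)
    -- the first four partial x-derivatives of v exist on [0,T]×[xmin,xmax]
    (hvx : ∀ t ∈ Icc (0:ℝ) T, ∀ x ∈ Icc xmin xmax,
      HasDerivWithinAt (fun y => v t y) (vx t x) (Icc xmin xmax) x)
    (hvxx : ∀ t ∈ Icc (0:ℝ) T, ∀ x ∈ Icc xmin xmax,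
      HasDerivWithinAt (fun y => vx t y) (vxx t x) (Icc xmin xmax) x)
    (hvx3 : ∀ t ∈ Icc (0:ℝ) T, ∀ x ∈ Icc xmin xmax,
      HasDerivWithinAt (fun y => vxx t y) (vx3 t x) (Icc xmin xmax) x)
    (hvx4 : ∀ t ∈ Icc (0:ℝ) T, ∀ x ∈ Icc xmin xmax,
      HasDerivWithinAt (fun y => vx3 t y) (vx4 t x) (Icc xmin xmax) x)
    -- the partial derivatives are continuous
    (hcont : ContOn2 vt T xmin xmax ∧ ContOn2 vtt T xmin xmax ∧
      ContOn2 vttt T xmin xmax ∧ ContOn2 vx T xmin xmax ∧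
      ContOn2 vxx T xmin xmax ∧ ContOn2 vx3 T xmin xmax ∧ ContOn2 vx4 T xmin xmax)
    -- the partial derivatives are bounded
    (hbdd : BddOn2 vt T xmin xmax ∧ BddOn2 vtt T xmin xmax ∧
      BddOn2 vttt T xmin xmax ∧ BddOn2 vx T xmin xmax ∧
      BddOn2 vxx T xmin xmax ∧ BddOn2 vx3 T xmin xmax ∧ BddOn2 vx4 T xmin xmax)
    -- σ², b, r are bounded and C² in t with bounded derivatives
    (hs2 : BddOn2 s2 T xmin xmax ∧ ∃ s2t s2tt, C2inT s2 s2t s2tt T xmin xmax)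
    (hbcoef : BddOn2 b T xmin xmax ∧ ∃ bt btt, C2inT b bt btt T xmin xmax)
    (hrcoef : BddOn2 r T xmin xmax ∧ ∃ rt rtt, C2inT r rt rtt T xmin xmax)
    -- φ and f are C² in t with bounded derivatives
    (hφ : ∃ φt φtt, C2inT φ φt φtt T xmin xmax)
    (hf : ∃ ft ftt, C2inT f ft ftt T xmin xmax)
    -- v is a classical solution of the obstacle equation on (0,T) × Ω
    (hPDE : ∀ t ∈ Ioo (0:ℝ) T, ∀ x ∈ Ioo xmin xmax,
      min (vt t x + (-(1/2) * s2 t x * vxx t x + b t x * vx t x + r t x * v t x)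
            - f t x)
          (v t x - φ t x - f t x) = 0) :
    ∃ C : ℝ, 0 ≤ C ∧
      ∀ τ h t x : ℝ, 0 < τ → 0 < h →
        Icc t (t + τ) ⊆ Icc (0:ℝ) T → Icc (x - h) (x + h) ⊆ Icc xmin xmax →
        |min ((v (t + τ) x - v t x) / τ
              + (1/2) * Ah s2 b r v h (t + τ) x + (1/2) * Ah s2 b r v h t x
              - f (t + τ/2) x)
             (v (t + τ) x - φ (t + τ) x - f (t + τ) x)|
          ≤ C * (τ^2 + h^2) :=
  CN_obstacle_residual_second_order_general T xmin xmax v vt vtt vttt vx vxx vx3 vx4 s2 b r φ f hvt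
    hvtt hvttt hvx hvxx hvx3 hvx4 hcont hbdd hs2 hbcoef hrcoef hφ hf hPDE
end

section
/- Let J ≥ 1, h > 0, η₀ > 0, L ≥ 0, M_b ≥ 0, M_r ≥ 0. Let a_1,…,a_J, b_1,…,b_J, r_1,…,r_J ∈ ℝ satisfy a_i ≥ η₀ for all i, |a_i − a_{i−1}| ≤ L h for 2 ≤ i ≤ J, |b_i| ≤ M_b and |r_i| ≤ M_r for all i. Let A be the J×J tridiagonal matrix A = (1/h²)·tridiag(−a_i, 2a_i, −a_i) + (1/(2h))·tridiag(−b_i, 0, b_i) + diag(r_i), i.e., A_{i,i−1} = −a_i/h² − b_i/(2h), A_{i,i} = 2a_i/h² + r_i, A_{i,i+1} = −a_i/h² + b_i/(2h). Then with η := η₀/2 there exists a constant γ ≥ 0 depending only on η₀, L, M_b, M_r (not on J, h) such that for all e ∈ ℝ^J: ⟨e, A e⟩ ≥ η · N(e/h)² − γ · ‖e‖₂², where N(x)² := Σ_{i=1}^{J+1} (x_i − x_{i−1})² with the convention x_0 = x_{J+1} = 0. -/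
/-!
Extend `e` by zero to `u_0, …, u_{J+1}` and the coefficients by constants. Summation by parts
writes `⟨e, A e⟩` as `Σ r_k u_k²` plus a sum over the `J + 1` edges `(k, k+1)` of
`(a_{k+1} u_{k+1} - a_k u_k)(u_{k+1} - u_k)/h² + (b_k u_k + b_{k+1} u_{k+1})(u_{k+1} - u_k)/(2h)`.
On each edge `a_{k+1} ≥ η₀` yields `η₀ ((u_{k+1} - u_k)/h)²`, while the cross terms coming from
`a_{k+1} - a_k = O(h)` and from the convection are absorbed by Young's inequality, each with
weight `η₀/8`, at the price of multiples of `u_k²` and `u_{k+1}²`. This gives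
`γ = 2L²/η₀ + Mb²/η₀ + Mr`.
-/

/-- Extension of a vector `x ∈ ℝ^J` (1-based components `x_1,…,x_J`) by zero:
`x_0 = x_{J+1} = 0` (and `0` outside). -/
noncomputable def extz (J : ℕ) (x : Fin J → ℝ) (k : ℕ) : ℝ :=
  if hk : 1 ≤ k ∧ k ≤ J then x ⟨k - 1, by omega⟩ else 0

/-- Square of the discrete gradient seminorm
`N(x)² = Σ_{i=1}^{J+1} (x_i − x_{i−1})²` with `x_0 = x_{J+1} = 0`. -/
noncomputable def Nsq (J : ℕ) (x : Fin J → ℝ) : ℝ :=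
  ∑ i ∈ Finset.Icc 1 (J + 1), (extz J x i - extz J x (i - 1))^2

open Finset

section ZeroExtension

variable {J : ℕ} (x : Fin J → ℝ)

theorem extz_zero : extz J x 0 = 0 := by
  simp [extz]

theorem extz_of_lt {m : ℕ} (hm : J < m) : extz J x m = 0 := by
  rw [extz, dif_neg (by omega)]

theorem extz_succ (i : Fin J) : extz J x (i + 1) = x i := by
  rw [extz, dif_pos (by omega)]
  rfl

theorem extz_div (h : ℝ) (m : ℕ) : extz J (fun i => x i / h) m = extz J x m / h := by
  unfold extz
  split_ifs <;> simp

theorem extz_eq_sum (m : ℕ) : extz J x m = ∑ j : Fin J, if (j : ℕ) + 1 = m then x j else 0 := by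
  unfold extz
  split_ifs with hm
  · rw [sum_eq_single ⟨m - 1, by omega⟩
      (fun j _ hj => if_neg fun h => hj (by ext; simp; omega)) (by simp), if_pos (by simp; omega)]
  · exact (sum_eq_zero fun j _ => if_neg (by omega)).symm

theorem Nsq_eq_sum_range : Nsq J x = ∑ k ∈ range (J + 1), (extz J x (k + 1) - extz J x k) ^ 2 := by
  rw [Nsq, ← Ico_add_one_right_eq_Icc, sum_Ico_eq_sum_range]
  refine sum_congr rfl fun k _ => ?_
  rw [add_comm 1 k, Nat.add_sub_cancel]

theorem sum_sq_eq_sum_range_extz : ∑ i, x i ^ 2 = ∑ k ∈ range J, extz J x (k + 1) ^ 2 := by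
  rw [← Fin.sum_univ_eq_sum_range (fun k => extz J x (k + 1) ^ 2)]
  simp only [extz_succ]

end ZeroExtension

theorem mulVec_tridiagonal {J : ℕ} {A : Matrix (Fin J) (Fin J) ℝ} {d p q : Fin J → ℝ}
    (hA : ∀ i j : Fin J, A i j =
      if i = j then d i else if (i : ℕ) + 1 = j then p i else if (j : ℕ) + 1 = i then q i else 0)
    (e : Fin J → ℝ) (i : Fin J) :
    A.mulVec e i = q i * extz J e i + d i * extz J e (i + 1) + p i * extz J e (i + 2) := by
  rw [extz_succ, extz_eq_sum, extz_eq_sum, mul_sum, mul_sum, Matrix.mulVec,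
    dotProduct]
  have hdiag : d i * e i = ∑ j, if i = j then d i * e j else 0 := by simp
  rw [hdiag, ← sum_add_distrib, ← sum_add_distrib]
  refine sum_congr rfl fun j _ => ?_
  rw [hA]
  simp only [← Fin.val_inj]
  split_ifs <;> first | (exfalso; omega) | ring

theorem sum_range_succ_add_shift {M : Type*} [AddCommMonoid M] (F G : ℕ → M) {n : ℕ}
    (hF : F n = 0) (hG : G 0 = 0) :
    ∑ k ∈ range (n + 1), (F k + G k) = ∑ k ∈ range n, (F k + G (k + 1)) := by
  rw [sum_add_distrib, sum_range_succ, hF, sum_range_succ', hG, add_zero, add_zero,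
    ← sum_add_distrib]

-- Constant extension beyond both ends keeps the lower bound and the increment bound of `x`.
def clampExt {α : Type*} {n : ℕ} (x : Fin (n + 1) → α) (m : ℕ) : α :=
  x ⟨min (m - 1) n, Nat.lt_succ_of_le (min_le_right _ _)⟩

theorem clampExt_succ {α : Type*} {n : ℕ} (x : Fin (n + 1) → α) (i : Fin (n + 1)) :
    clampExt x (i + 1) = x i := by
  simp [clampExt, Nat.le_of_lt_succ i.isLt]

theorem abs_clampExt_succ_sub_le {n : ℕ} {x : Fin (n + 1) → ℝ} {C : ℝ} (hC : 0 ≤ C)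
    (hx : ∀ i j : Fin (n + 1), (i : ℕ) + 1 = j → |x j - x i| ≤ C) (k : ℕ) :
    |clampExt x (k + 1) - clampExt x k| ≤ C := by
  rcases (by omega : k = 0 ∨ n < k ∨ (0 < k ∧ k ≤ n)) with hk | hk | ⟨hk₀, hkn⟩
  · simpa [hk, clampExt] using hC
  · have hmin : min k n = min (k - 1) n := by omega
    simpa [clampExt, hmin] using hC
  · have hmin : min k n = k := by omega
    have hmin' : min (k - 1) n = k - 1 := by omega
    simpa [clampExt, hmin, hmin'] using hx ⟨k - 1, by omega⟩ ⟨k, by omega⟩ (by simp; omega)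

theorem neg_sq_sub_le_mul_mul {ε K M c x y : ℝ} (hε : 0 < ε) (hc : |c| ≤ M)
    (hK : M ^ 2 ≤ 4 * ε * K) : -(ε * x ^ 2) - K * y ^ 2 ≤ c * (y * x) := by
  have hcyx : -(c * (y * x)) ≤ M * (|y| * |x|) :=
    calc -(c * (y * x)) ≤ |c * (y * x)| := neg_le_abs _
      _ = |c| * (|y| * |x|) := by rw [abs_mul, abs_mul]
      _ ≤ M * (|y| * |x|) := mul_le_mul_of_nonneg_right hc (by positivity)
  have hyx : M * (|y| * |x|) ≤ ε * x ^ 2 + K * y ^ 2 := by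
    refine le_of_mul_le_mul_left ?_ (by positivity : 0 < 4 * ε)
    rw [← sq_abs x, ← sq_abs y]
    nlinarith [sq_nonneg (2 * ε * |x| - M * |y|), mul_le_mul_of_nonneg_right hK (sq_nonneg |y|)]
  linarith

theorem sum_tridiagonal_form_eq (u α β ρ : ℕ → ℝ) (h : ℝ) {n : ℕ} (h0 : u 0 = 0)
    (hn : u (n + 1) = 0) :
    ∑ k ∈ range n, u (k + 1) * ((-α (k + 1) / h ^ 2 - β (k + 1) / (2 * h)) * u k
        + (2 * α (k + 1) / h ^ 2 + ρ (k + 1)) * u (k + 1)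
        + (-α (k + 1) / h ^ 2 + β (k + 1) / (2 * h)) * u (k + 2))
      = ∑ k ∈ range (n + 1), ((α (k + 1) * u (k + 1) - α k * u k) * (u (k + 1) - u k) / h ^ 2
          + (β k * u k + β (k + 1) * u (k + 1)) * (u (k + 1) - u k) / (2 * h))
        + ∑ k ∈ range n, ρ (k + 1) * u (k + 1) ^ 2 := by
  set F : ℕ → ℝ := fun k =>
    u (k + 1) * (α (k + 1) * (u (k + 1) - u k) / h ^ 2 + β (k + 1) * (u (k + 1) - u k) / (2 * h))
  set G : ℕ → ℝ := fun k =>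
    u k * (-α k * (u (k + 1) - u k) / h ^ 2 + β k * (u (k + 1) - u k) / (2 * h))
  symm
  rw [sum_congr rfl fun k _ => (by ring : _ = F k + G k),
    sum_range_succ_add_shift F G (by simp [F, hn]) (by simp [G, h0]), ← sum_add_distrib]
  exact sum_congr rfl fun k _ => by simp only [F, G]; ring

theorem edge_term_lower_bound {η₀ L Mb h α α' β β' u v : ℝ} (hη : 0 < η₀) (hh : 0 < h)
    (hα : η₀ ≤ α) (hαα' : |α - α'| ≤ L * h) (hβ : |β| ≤ Mb) (hβ' : |β'| ≤ Mb) :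
    η₀ / 2 * ((v - u) / h) ^ 2 - (2 * L ^ 2 / η₀ + Mb ^ 2 / (2 * η₀)) * u ^ 2
        - Mb ^ 2 / (2 * η₀) * v ^ 2
      ≤ (α * v - α' * u) * (v - u) / h ^ 2 + (β * u + β' * v) * (v - u) / (2 * h) := by
  set t := (v - u) / h
  have hexpand : (α * v - α' * u) * (v - u) / h ^ 2 + (β * u + β' * v) * (v - u) / (2 * h)
      = α * t ^ 2 + (α - α') / h * (u * t) + β / 2 * (u * t) + β' / 2 * (v * t) := by
    simp only [t]; field_simp; ring
  have hdiff : |(α - α') / h| ≤ L := by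
    rw [abs_div, abs_of_pos hh, div_le_iff₀ hh]; exact hαα'
  have hβ₂ : |β / 2| ≤ Mb / 2 := by rw [abs_div, abs_two]; linarith
  have hβ₂' : |β' / 2| ≤ Mb / 2 := by rw [abs_div, abs_two]; linarith
  have hε : 0 < η₀ / 8 := by positivity
  have hKL : L ^ 2 ≤ 4 * (η₀ / 8) * (2 * L ^ 2 / η₀) := le_of_eq (by field_simp; ring)
  have hKb : (Mb / 2) ^ 2 ≤ 4 * (η₀ / 8) * (Mb ^ 2 / (2 * η₀)) := le_of_eq (by field_simp; ring)
  have hvariation := neg_sq_sub_le_mul_mul (x := t) (y := u) hε hdiff hKL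
  have hconvection := neg_sq_sub_le_mul_mul (x := t) (y := u) hε hβ₂ hKb
  have hconvection' := neg_sq_sub_le_mul_mul (x := t) (y := v) hε hβ₂' hKb
  have hdiffusion : η₀ * t ^ 2 ≤ α * t ^ 2 := mul_le_mul_of_nonneg_right hα (sq_nonneg t)
  rw [hexpand]
  linarith [mul_nonneg hη.le (sq_nonneg t)]

theorem tridiagonal_form_coercive {η₀ L Mb Mr h : ℝ} (hη : 0 < η₀) (hh : 0 < h)
    {u α β ρ : ℕ → ℝ} {n : ℕ} (h0 : u 0 = 0) (hn : u (n + 1) = 0) (hα : ∀ k, η₀ ≤ α k)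
    (hαL : ∀ k, |α (k + 1) - α k| ≤ L * h) (hβ : ∀ k, |β k| ≤ Mb) (hρ : ∀ k, |ρ k| ≤ Mr) :
    η₀ / 2 * ∑ k ∈ range (n + 1), ((u (k + 1) - u k) / h) ^ 2
        - (2 * L ^ 2 / η₀ + Mb ^ 2 / η₀ + Mr) * ∑ k ∈ range n, u (k + 1) ^ 2
      ≤ ∑ k ∈ range n, u (k + 1) * ((-α (k + 1) / h ^ 2 - β (k + 1) / (2 * h)) * u k
          + (2 * α (k + 1) / h ^ 2 + ρ (k + 1)) * u (k + 1)
          + (-α (k + 1) / h ^ 2 + β (k + 1) / (2 * h)) * u (k + 2)) := by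
  rw [sum_tridiagonal_form_eq u α β ρ h h0 hn]
  have hedges := sum_le_sum fun k (_ : k ∈ range (n + 1)) =>
    edge_term_lower_bound (u := u k) (v := u (k + 1)) hη hh (hα (k + 1)) (hαL k) (hβ k) (hβ (k + 1))
  have hreaction : ∑ k ∈ range n, -Mr * u (k + 1) ^ 2 ≤ ∑ k ∈ range n, ρ (k + 1) * u (k + 1) ^ 2 :=
    sum_le_sum fun k _ =>
      mul_le_mul_of_nonneg_right (neg_le_of_abs_le (hρ (k + 1))) (sq_nonneg _)
  have hleft : ∑ k ∈ range (n + 1), u k ^ 2 = ∑ k ∈ range n, u (k + 1) ^ 2 := by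
    rw [sum_range_succ', h0]; ring
  have hright : ∑ k ∈ range (n + 1), u (k + 1) ^ 2 = ∑ k ∈ range n, u (k + 1) ^ 2 := by
    rw [sum_range_succ, hn]; ring
  simp only [sum_sub_distrib, ← mul_sum, hleft, hright] at hedges hreaction
  have hhalves : Mb ^ 2 / η₀ * ∑ k ∈ range n, u (k + 1) ^ 2
      = 2 * (Mb ^ 2 / (2 * η₀) * ∑ k ∈ range n, u (k + 1) ^ 2) := by
    field_simp
  linarith

theorem fd_matrix_coercivity_general
    (η₀ L Mb Mr : ℝ) (hη : 0 < η₀) (hL : 0 ≤ L) (hMr : 0 ≤ Mr) :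
    ∃ γ : ℝ, 0 ≤ γ ∧
      ∀ (J : ℕ), 1 ≤ J → ∀ (h : ℝ), 0 < h →
      ∀ a b r : Fin J → ℝ,
        (∀ i, η₀ ≤ a i) →
        (∀ i j : Fin J, (i : ℕ) + 1 = (j : ℕ) → |a j - a i| ≤ L * h) →
        (∀ i, |b i| ≤ Mb) → (∀ i, |r i| ≤ Mr) →
      ∀ A : Matrix (Fin J) (Fin J) ℝ,
        (∀ i j : Fin J, A i j =
          if i = j then 2 * a i / h^2 + r i
          else if (i : ℕ) + 1 = (j : ℕ) then -(a i) / h^2 + b i / (2*h)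
          else if (j : ℕ) + 1 = (i : ℕ) then -(a i) / h^2 - b i / (2*h)
          else 0) →
      ∀ e : Fin J → ℝ,
        (η₀ / 2) * Nsq J (fun i => e i / h) - γ * ∑ i, (e i)^2
          ≤ ∑ i, e i * A.mulVec e i := by
  refine ⟨2 * L ^ 2 / η₀ + Mb ^ 2 / η₀ + Mr, by positivity, ?_⟩
  intro J hJ h hh a b r ha haL hb hr A hA e
  obtain ⟨n, rfl⟩ := Nat.exists_eq_add_of_le' hJ
  rw [Nsq_eq_sum_range, sum_sq_eq_sum_range_extz]
  simp only [extz_div, ← sub_div]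
  refine (tridiagonal_form_coercive (α := clampExt a) (β := clampExt b) (ρ := clampExt r) hη hh
    (extz_zero e) (extz_of_lt e (Nat.lt_succ_self _)) (fun _ => ha _)
    (abs_clampExt_succ_sub_le (by positivity) haL) (fun _ => hb _) (fun _ => hr _)).trans_eq ?_
  rw [← Fin.sum_univ_eq_sum_range]
  refine sum_congr rfl fun i _ => ?_
  rw [mulVec_tridiagonal hA, extz_succ, clampExt_succ, clampExt_succ, clampExt_succ]

/-- Coercivity of the centered finite-difference matrix `A`
for `𝒜u = −a u_xx + b u_x + r u`: with `η = η₀/2` there is a constant `γ ≥ 0`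
depending only on `η₀, L, M_b, M_r` such that
`⟨e, Ae⟩ ≥ η N(e/h)² − γ ‖e‖₂²` for all `e ∈ ℝ^J`. -/
theorem fd_matrix_coercivity
    (η₀ L Mb Mr : ℝ) (hη : 0 < η₀) (hL : 0 ≤ L) (hMb : 0 ≤ Mb) (hMr : 0 ≤ Mr) :
    ∃ γ : ℝ, 0 ≤ γ ∧
      ∀ (J : ℕ), 1 ≤ J → ∀ (h : ℝ), 0 < h →
      ∀ a b r : Fin J → ℝ,
        (∀ i, η₀ ≤ a i) →
        (∀ i j : Fin J, (i : ℕ) + 1 = (j : ℕ) → |a j - a i| ≤ L * h) →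
        (∀ i, |b i| ≤ Mb) → (∀ i, |r i| ≤ Mr) →
      ∀ A : Matrix (Fin J) (Fin J) ℝ,
        (∀ i j : Fin J, A i j =
          if i = j then 2 * a i / h^2 + r i
          else if (i : ℕ) + 1 = (j : ℕ) then -(a i) / h^2 + b i / (2*h)
          else if (j : ℕ) + 1 = (i : ℕ) then -(a i) / h^2 - b i / (2*h)
          else 0) →
      ∀ e : Fin J → ℝ,
        (η₀ / 2) * Nsq J (fun i => e i / h) - γ * ∑ i, (e i)^2
          ≤ ∑ i, e i * A.mulVec e i :=
  fd_matrix_coercivity_general η₀ L Mb Mr hη hL hMr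
end

section
/- Let J ≥ 1, h > 0, η₀ > 0, L ≥ 0, and let a_1,…,a_J ∈ ℝ satisfy a_i ≥ η₀ for all i and |a_i − a_{i−1}| ≤ L h for 2 ≤ i ≤ J. Then for every e ∈ ℝ^J (with the conventions e_0 = e_{J+1} = 0 and arbitrary a_0, a_{J+1} since they are multiplied by e_0, e_{J+1}): (1/h²) Σ_{i=1}^{J+1} (a_i e_i − a_{i−1} e_{i−1})(e_i − e_{i−1}) ≥ η₀ · N(e/h)² − L · ‖e‖₂ · N(e/h), where N(x)² := Σ_{i=1}^{J+1}(x_i − x_{i−1})² with x_0 = x_{J+1} = 0. -/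
/-!
Writing `d = e i - e (i - 1)`, each term of the form splits as
`(a i * e i - a (i - 1) * e (i - 1)) * d = a i * d ^ 2 + (a i - a (i - 1)) * e (i - 1) * d`.
The first part is at least `η₀ d ^ 2` and the second at least `-L h |e (i - 1)| |d|`; at the two
boundary terms one of `e 0`, `e (J + 1)` vanishes, so only `a 1` resp. `a J` enters. Summing and
applying Cauchy–Schwarz to `∑ |e (i - 1)| |d|` gives the bound; dividing by `h ^ 2` rescales it.
-/

open Finset

theorem sum_Icc_one_succ_sub_one {M : Type*} [AddCommMonoid M] (J : ℕ) (f : ℕ → M)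
    (hf : f 0 = 0) : ∑ i ∈ Icc 1 (J + 1), f (i - 1) = ∑ i ∈ Icc 1 J, f i := by
  rw [← map_add_right_Icc 0 J 1, sum_map, ← add_sum_Ioc_eq_sum_Icc (Nat.zero_le J),
    ← Icc_add_one_left_eq_Ioc]
  simp [hf]

theorem le_diffusion_term_of_abs_sub_le {η K a b x y : ℝ} (ha : η ≤ a) (hab : |a - b| ≤ K) :
    η * (x - y) ^ 2 - K * (|y| * |x - y|) ≤ (a * x - b * y) * (x - y) := by
  have hsplit : (a * x - b * y) * (x - y) = a * (x - y) ^ 2 + (a - b) * (y * (x - y)) := by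
    ring
  have hcross : |(a - b) * (y * (x - y))| ≤ K * (|y| * |x - y|) := by
    rw [abs_mul, abs_mul]
    gcongr
  have hmain : η * (x - y) ^ 2 ≤ a * (x - y) ^ 2 := by gcongr
  linarith [neg_abs_le ((a - b) * (y * (x - y)))]

section
variable {J : ℕ} {η K : ℝ} {a e : ℕ → ℝ}

theorem le_diffusion_term (hJ : 1 ≤ J) (hK : 0 ≤ K) (ha : ∀ i, 1 ≤ i → i ≤ J → η ≤ a i)
    (haK : ∀ i, 2 ≤ i → i ≤ J → |a i - a (i - 1)| ≤ K) (he0 : e 0 = 0) (heJ : e (J + 1) = 0)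
    {i : ℕ} (hi : i ∈ Icc 1 (J + 1)) :
    η * (e i - e (i - 1)) ^ 2 - K * (|e (i - 1)| * |e i - e (i - 1)|)
      ≤ (a i * e i - a (i - 1) * e (i - 1)) * (e i - e (i - 1)) := by
  obtain ⟨hi1, hiJ⟩ := mem_Icc.mp hi
  rcases hi1.eq_or_lt with rfl | hi2
  · have hfirst := mul_le_mul_of_nonneg_right (ha 1 le_rfl hJ) (sq_nonneg (e 1))
    simp only [Nat.sub_self, he0, abs_zero, zero_mul, mul_zero, sub_zero]
    linarith
  rcases hiJ.eq_or_lt with rfl | hiJ'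
  · have hlast := mul_le_mul_of_nonneg_right (ha J hJ le_rfl) (sq_nonneg (e J))
    have hcross : 0 ≤ K * (|e J| * |e (J + 1) - e J|) := by positivity
    simp only [Nat.add_sub_cancel, heJ] at hcross ⊢
    linarith
  exact le_diffusion_term_of_abs_sub_le (ha i hi1 (by omega)) (haK i hi2 (by omega))

theorem sum_abs_mul_abs_sub_le_sqrt_mul_sqrt (he0 : e 0 = 0) :
    ∑ i ∈ Icc 1 (J + 1), |e (i - 1)| * |e i - e (i - 1)|
      ≤ √(∑ i ∈ Icc 1 J, e i ^ 2) * √(∑ i ∈ Icc 1 (J + 1), (e i - e (i - 1)) ^ 2) := by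
  have hshift : ∑ i ∈ Icc 1 (J + 1), e (i - 1) ^ 2 = ∑ i ∈ Icc 1 J, e i ^ 2 :=
    sum_Icc_one_succ_sub_one J (fun i ↦ e i ^ 2) (by simp [he0])
  simpa only [sq_abs, hshift] using Real.sum_mul_le_sqrt_mul_sqrt (Icc 1 (J + 1))
    (fun i ↦ |e (i - 1)|) (fun i ↦ |e i - e (i - 1)|)

theorem le_diffusion_sum (hJ : 1 ≤ J) (hK : 0 ≤ K)
    (ha : ∀ i, 1 ≤ i → i ≤ J → η ≤ a i)
    (haK : ∀ i, 2 ≤ i → i ≤ J → |a i - a (i - 1)| ≤ K) (he0 : e 0 = 0) (heJ : e (J + 1) = 0) :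
    η * ∑ i ∈ Icc 1 (J + 1), (e i - e (i - 1)) ^ 2
      - K * √(∑ i ∈ Icc 1 J, e i ^ 2) * √(∑ i ∈ Icc 1 (J + 1), (e i - e (i - 1)) ^ 2)
      ≤ ∑ i ∈ Icc 1 (J + 1), (a i * e i - a (i - 1) * e (i - 1)) * (e i - e (i - 1)) := by
  have hterms := sum_le_sum fun i hi ↦ le_diffusion_term hJ hK ha haK he0 heJ hi
  rw [sum_sub_distrib, ← mul_sum, ← mul_sum] at hterms
  have hcs := mul_le_mul_of_nonneg_left (sum_abs_mul_abs_sub_le_sqrt_mul_sqrt (J := J) he0) hK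
  linarith

end

theorem diffusion_form_coercivity_general
    (J : ℕ) (hJ : 1 ≤ J) (h η₀ L : ℝ) (hh : 0 < h) (hL : 0 ≤ L)
    (a e : ℕ → ℝ)
    (ha : ∀ i, 1 ≤ i → i ≤ J → η₀ ≤ a i)
    (haL : ∀ i, 2 ≤ i → i ≤ J → |a i - a (i-1)| ≤ L * h)
    (he0 : e 0 = 0) (heJ : e (J+1) = 0) :
    η₀ * (∑ i ∈ Finset.Icc 1 (J+1), ((e i - e (i-1)) / h)^2)
      - L * Real.sqrt (∑ i ∈ Finset.Icc 1 J, (e i)^2)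
          * Real.sqrt (∑ i ∈ Finset.Icc 1 (J+1), ((e i - e (i-1)) / h)^2)
    ≤ (1/h^2) * ∑ i ∈ Finset.Icc 1 (J+1),
        (a i * e i - a (i-1) * e (i-1)) * (e i - e (i-1)) := by
  have hbound := le_diffusion_sum hJ (by positivity) ha haL he0 heJ
  set S := ∑ i ∈ Icc 1 (J + 1), (e i - e (i - 1)) ^ 2
  have hscale : ∑ i ∈ Icc 1 (J + 1), ((e i - e (i - 1)) / h) ^ 2 = S / h ^ 2 := by
    simp_rw [div_pow]
    rw [← sum_div]
  rw [hscale, Real.sqrt_div' _ (sq_nonneg h), Real.sqrt_sq hh.le]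
  calc η₀ * (S / h ^ 2) - L * √(∑ i ∈ Icc 1 J, e i ^ 2) * (√S / h)
      = (1 / h ^ 2) * (η₀ * S - L * h * √(∑ i ∈ Icc 1 J, e i ^ 2) * √S) := by
        field_simp
    _ ≤ _ := by gcongr

/-- Lower bound on the quadratic form of the finite-difference
discretization of the variable-coefficient diffusion `−a(x)∂ₓ²`:
`(1/h²) Σ_{i=1}^{J+1} (a_i e_i − a_{i−1} e_{i−1})(e_i − e_{i−1})
  ≥ η₀ N(e/h)² − L ‖e‖₂ N(e/h)`,
with conventions `e_0 = e_{J+1} = 0` (the values `a_0, a_{J+1}` are arbitrary). -/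
theorem diffusion_form_coercivity
    (J : ℕ) (hJ : 1 ≤ J) (h η₀ L : ℝ) (hh : 0 < h) (hη : 0 < η₀) (hL : 0 ≤ L)
    (a e : ℕ → ℝ)
    (ha : ∀ i, 1 ≤ i → i ≤ J → η₀ ≤ a i)
    (haL : ∀ i, 2 ≤ i → i ≤ J → |a i - a (i-1)| ≤ L * h)
    (he0 : e 0 = 0) (heJ : e (J+1) = 0) :
    η₀ * (∑ i ∈ Finset.Icc 1 (J+1), ((e i - e (i-1)) / h)^2)
      - L * Real.sqrt (∑ i ∈ Finset.Icc 1 J, (e i)^2)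
          * Real.sqrt (∑ i ∈ Finset.Icc 1 (J+1), ((e i - e (i-1)) / h)^2)
    ≤ (1/h^2) * ∑ i ∈ Finset.Icc 1 (J+1),
        (a i * e i - a (i-1) * e (i-1)) * (e i - e (i-1)) :=
  diffusion_form_coercivity_general J hJ h η₀ L hh hL a e ha haL he0 heJ
end

section
/- Let J ≥ 1, let B be a J×J real matrix, and let u, v, g, b_u, b_v, d ∈ ℝ^J. Assume min(Bu − b_u, u − g) = 0 and min(Bv − (b_v + d), v − g) = 0 (componentwise minima). Then ⟨B(v − u) − (b_v − b_u) − d, v − u⟩ ≤ 0, where ⟨·,·⟩ is the Euclidean inner product on ℝ^J. -/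
/-! Writing `p = Bu − b_u`, `q = Bv − (b_v + d)`, `x = u − g`, `y = v − g`, the claimed sum is
`∑ (q − p)ⱼ (y − x)ⱼ`. Each equation `min(a, z) = 0` is the complementarity condition
`a, z ≥ 0`, `a z = 0`, so every summand equals `−(qⱼ xⱼ + pⱼ yⱼ) ≤ 0`. -/

lemma nonneg_nonneg_mul_eq_zero_of_min_eq_zero {α : Type*} [MulZeroClass α] [LinearOrder α]
    {a z : α} (h : min a z = 0) : 0 ≤ a ∧ 0 ≤ z ∧ a * z = 0 := by
  rcases min_eq_iff.mp h with ⟨rfl, hz⟩ | ⟨rfl, ha⟩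
  · exact ⟨le_rfl, hz, zero_mul z⟩
  · exact ⟨ha, le_rfl, mul_zero a⟩

section Complementarity

variable {α : Type*} [CommRing α] [LinearOrder α] [IsStrictOrderedRing α]

lemma sub_mul_sub_nonpos_of_min_eq_zero {a b x y : α}
    (hax : min a x = 0) (hby : min b y = 0) : (b - a) * (y - x) ≤ 0 := by
  obtain ⟨ha, hx, hax⟩ := nonneg_nonneg_mul_eq_zero_of_min_eq_zero hax
  obtain ⟨hb, hy, hby⟩ := nonneg_nonneg_mul_eq_zero_of_min_eq_zero hby
  calc (b - a) * (y - x) = b * y + a * x - (b * x + a * y) := by ring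
    _ = -(b * x + a * y) := by rw [hby, hax, add_zero, zero_sub]
    _ ≤ 0 := neg_nonpos.mpr (by positivity)

lemma sum_sub_mul_sub_nonpos_of_min_eq_zero {ι : Type*} [Fintype ι] {p q x y : ι → α}
    (hpx : ∀ i, min (p i) (x i) = 0) (hqy : ∀ i, min (q i) (y i) = 0) :
    ∑ i, (q - p) i * (y - x) i ≤ 0 :=
  Finset.sum_nonpos fun i _ => sub_mul_sub_nonpos_of_min_eq_zero (hpx i) (hqy i)

end Complementarity

theorem obstacle_scheme_comparison_general
    (J : ℕ) (B : Matrix (Fin J) (Fin J) ℝ)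
    (u v g bu bv d : Fin J → ℝ)
    (hu : ∀ j, min ((B.mulVec u - bu) j) ((u - g) j) = 0)
    (hv : ∀ j, min ((B.mulVec v - (bv + d)) j) ((v - g) j) = 0) :
    ∑ j, (B.mulVec (v - u) - (bv - bu) - d) j * (v - u) j ≤ 0 := by
  have hres : B.mulVec (v - u) - (bv - bu) - d = (B.mulVec v - (bv + d)) - (B.mulVec u - bu) := by
    rw [Matrix.mulVec_sub]; abel
  have hdiff : v - u = (v - g) - (u - g) := (sub_sub_sub_cancel_right v u g).symm
  rw [hres, hdiff]
  exact sum_sub_mul_sub_nonpos_of_min_eq_zero hu hv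

/-- Comparison of the exact and perturbed obstacle problems:
if `min(Bu − b_u, u − g) = 0` and `min(Bv − (b_v + d), v − g) = 0`, then
`⟨B(v − u) − (b_v − b_u) − d, v − u⟩ ≤ 0`. -/
theorem obstacle_scheme_comparison
    (J : ℕ) (hJ : 1 ≤ J) (B : Matrix (Fin J) (Fin J) ℝ)
    (u v g bu bv d : Fin J → ℝ)
    (hu : ∀ j, min ((B.mulVec u - bu) j) ((u - g) j) = 0)
    (hv : ∀ j, min ((B.mulVec v - (bv + d)) j) ((v - g) j) = 0) :
    ∑ j, (B.mulVec (v - u) - (bv - bu) - d) j * (v - u) j ≤ 0 :=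
  obstacle_scheme_comparison_general J B u v g bu bv d hu hv
end

section
/- Let J ≥ 1, h > 0, η > 0, γ ≥ 0, T > 0, and let A be a J×J real matrix satisfying the coercivity estimate ⟨e, A e⟩ ≥ η N(e/h)² − γ ‖e‖₂² for all e ∈ ℝ^J, where N(x)² = Σ_{i=1}^{J+1}(x_i − x_{i−1})² with x_0 = x_{J+1} = 0. Set γ̄ := 2 + 4γ and t_n := nτ. Then there exist τ₀ > 0 and a constant C₁ ≥ 0 (depending only on η, γ, not on J, h, τ, T) with the following property. Let 0 < τ ≤ τ₀, let N ≥ 2 with Nτ ≤ T, and let (u^n)_{0≤n≤N}, (v^n)_{0≤n≤N}, (g^n)_{2≤n≤N}, (c^n)_{2≤n≤N}, (ε̄^n)_{1≤n≤N−1} be vectors in ℝ^J such that for all 1 ≤ n ≤ N−1: min( (I + (2τ/3)A) u^{n+1} − (4/3)u^n + (1/3)u^{n−1} + c^{n+1}, u^{n+1} − g^{n+1} ) = 0 and min( (I + (2τ/3)A) v^{n+1} − (4/3)v^n + (1/3)v^{n−1} + c^{n+1} − (2τ/3) ε̄^n, v^{n+1} − g^{n+1} ) = 0 (componentwise minima).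 Then, with e^n := v^n − u^n, for all 1 ≤ n ≤ N−1: e^{−γ̄ t_n} ‖e^{n+1}‖₂² + τ η Σ_{k=1}^{n} e^{−γ̄ t_k} N(e^{k+1}/h)² ≤ C₁ ( ‖e^0‖₂² + ‖e^1‖₂² + τ Σ_{k=1}^{n} e^{−γ̄ t_k} ‖ε̄^k‖₂² ). -/
/-!
Subtracting the two obstacle problems and testing with `eⁿ⁺¹` gives, by complementarity of the
two `min` conditions, a variational inequality for the error. Its BDF2 part is handled by the
G-stability identity `2⟨x, 3x − 4y + z⟩ = G(x, y) − G(y, z) + ‖x − 2y + z‖²` with the energy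
`G(x, y) = ‖x‖² + ‖2x − y‖²`, the operator part by coercivity, and the source by Young's
inequality. This yields `(1 − (1 + 4γ)τ) G(eⁿ⁺¹, eⁿ) + 4τη N² ≤ G(eⁿ, eⁿ⁻¹) + 4τ‖ε̄ⁿ‖²`; for
`τ ≤ 1/γ̄²` the factor dominates `e^{−γ̄τ}`, and the weighted sum telescopes.
-/

open Finset RealInnerProductSpace WithLp

lemma Nsq_nonneg (J : ℕ) (x : Fin J → ℝ) : 0 ≤ Nsq J x :=
  sum_nonneg fun _ _ => sq_nonneg _

lemma Real.exp_neg_mul_le_one_sub {c τ : ℝ} (hc : 1 ≤ c) (hτ : 0 ≤ τ) (hcτ : c ^ 2 * τ ≤ 1) :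
    Real.exp (-(c * τ)) ≤ 1 - (c - 1) * τ := by
  have hlin : c * τ + 1 ≤ Real.exp (c * τ) := Real.add_one_le_exp _
  have hpos : 0 ≤ 1 - (c - 1) * τ := by nlinarith
  rw [Real.exp_neg, inv_le_iff_one_le_mul₀ (Real.exp_pos _)]
  -- `(1 - (c - 1)τ)(1 + cτ) = 1 + τ(1 - c²τ) + cτ²`
  nlinarith [mul_le_mul_of_nonneg_left hlin hpos, mul_nonneg hτ (sub_nonneg.2 hcτ),
    mul_nonneg (by linarith : (0 : ℝ) ≤ c) (sq_nonneg τ)]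

lemma Real.one_le_three_mul_exp_neg {s : ℝ} (hs : s ≤ 1) : 1 ≤ 3 * Real.exp (-s) := by
  have := Real.exp_le_exp.mpr (neg_le_neg hs)
  linarith [Real.exp_neg_one_gt_d9]

lemma weighted_telescope {ρ : ℝ} (hρ : 0 ≤ ρ) {a b c : ℕ → ℝ} (n : ℕ)
    (step : ∀ k ∈ Icc 1 n, ρ * a (k + 1) + b k ≤ a k + c k) :
    ρ ^ (n + 1) * a (n + 1) + ∑ k ∈ Icc 1 n, ρ ^ k * b k ≤
      ρ * a 1 + ∑ k ∈ Icc 1 n, ρ ^ k * c k := by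
  induction n with
  | zero => simp
  | succ n ih =>
    have hlast := mul_le_mul_of_nonneg_left (step (n + 1) (by simp)) (pow_nonneg hρ (n + 1))
    have hprev := ih fun k hk => step k (by simp at hk ⊢; omega)
    rw [sum_Icc_succ_top (by omega), sum_Icc_succ_top (by omega)]
    linear_combination hprev + hlast

section Energy

variable {E : Type*} [NormedAddCommGroup E] [InnerProductSpace ℝ E]

def bdf2Energy (x y : E) : ℝ := ‖x‖ ^ 2 + ‖(2 : ℝ) • x - y‖ ^ 2

lemma sq_norm_le_bdf2Energy (x y : E) : ‖x‖ ^ 2 ≤ bdf2Energy x y :=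
  le_add_of_nonneg_right (sq_nonneg _)

lemma bdf2Energy_le (x y : E) : bdf2Energy x y ≤ 9 * (‖x‖ ^ 2 + ‖y‖ ^ 2) := by
  have h : ‖(2 : ℝ) • x - y‖ ≤ 2 * ‖x‖ + ‖y‖ := by
    simpa [norm_smul] using norm_sub_le ((2 : ℝ) • x) y
  have h' := pow_le_pow_left₀ (norm_nonneg _) h 2
  unfold bdf2Energy
  nlinarith [sq_nonneg (2 * ‖x‖ - ‖y‖), sq_nonneg ‖y‖]

lemma two_mul_inner_bdf2 (x y z : E) :
    2 * ⟪x, (3 : ℝ) • x - (4 : ℝ) • y + z⟫ =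
      bdf2Energy x y - bdf2Energy y z + ‖x - (2 : ℝ) • y + z‖ ^ 2 := by
  simp only [bdf2Energy, ← real_inner_self_eq_norm_sq, inner_add_left, inner_add_right,
    inner_sub_left, inner_sub_right, real_inner_smul_left, real_inner_smul_right,
    real_inner_comm x y, real_inner_comm x z, real_inner_comm y z]
  ring

lemma bdf2Energy_step {A : E → E} {x y z w : E} {τ η γ ν : ℝ} (hτ : 0 ≤ τ)
    (hcoer : η * ν - γ * ‖x‖ ^ 2 ≤ ⟪x, A x⟫)
    (hscheme : ⟪x, x - (4 / 3 : ℝ) • y + (1 / 3 : ℝ) • z + (2 * τ / 3) • (A x - w)⟫ ≤ 0) :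
    bdf2Energy x y + 4 * τ * η * ν ≤
      bdf2Energy y z + (1 + 4 * γ) * τ * ‖x‖ ^ 2 + 4 * τ * ‖w‖ ^ 2 := by
  have hG := two_mul_inner_bdf2 x y z
  have hsplit : ⟪x, x - (4 / 3 : ℝ) • y + (1 / 3 : ℝ) • z + (2 * τ / 3) • (A x - w)⟫ =
      ⟪x, (3 : ℝ) • x - (4 : ℝ) • y + z⟫ / 3 + 2 * τ / 3 * (⟪x, A x⟫ - ⟪x, w⟫) := by
    simp only [inner_add_right, inner_sub_right, real_inner_smul_right]
    ring
  have hyoung : 4 * ⟪x, w⟫ ≤ ‖x‖ ^ 2 + 4 * ‖w‖ ^ 2 := by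
    nlinarith [real_inner_le_norm x w, sq_nonneg (‖x‖ - 2 * ‖w‖)]
  linarith [mul_le_mul_of_nonneg_left hcoer hτ, mul_le_mul_of_nonneg_left hyoung hτ,
    sq_nonneg ‖x - (2 : ℝ) • y + z‖]

lemma bdf2_weighted_energy_bound {e : ℕ → E} {ν s : ℕ → ℝ} {c τ η : ℝ} (hc : 1 ≤ c)
    (hτ : 0 ≤ τ) (hcτ : c ^ 2 * τ ≤ 1) (hη : 0 ≤ η) (hν : ∀ k, 0 ≤ ν k) (hs : ∀ k, 0 ≤ s k)
    (n : ℕ)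
    (step : ∀ k ∈ Icc 1 n, bdf2Energy (e (k + 1)) (e k) + 4 * τ * η * ν k ≤
      bdf2Energy (e k) (e (k - 1)) + (c - 1) * τ * ‖e (k + 1)‖ ^ 2 + 4 * τ * s k) :
    Real.exp (-(c * τ)) ^ n * ‖e (n + 1)‖ ^ 2
        + τ * η * ∑ k ∈ Icc 1 n, Real.exp (-(c * τ)) ^ k * ν k ≤
      27 * (‖e 0‖ ^ 2 + ‖e 1‖ ^ 2 + τ * ∑ k ∈ Icc 1 n, Real.exp (-(c * τ)) ^ k * s k) := by
  set ρ := Real.exp (-(c * τ))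
  have hρ0 : 0 ≤ ρ := (Real.exp_pos _).le
  have hρ : ρ ≤ 1 - (c - 1) * τ := Real.exp_neg_mul_le_one_sub hc hτ hcτ
  have hρ3 : 1 ≤ 3 * ρ := Real.one_le_three_mul_exp_neg (by nlinarith)
  have hdecay : ∀ k ∈ Icc 1 n, ρ * bdf2Energy (e (k + 1)) (e k) + 4 * τ * η * ν k ≤
      bdf2Energy (e k) (e (k - 1)) + 4 * τ * s k := fun k hk => by
    have hE := sq_norm_le_bdf2Energy (e (k + 1)) (e k)
    nlinarith [step k hk, mul_le_mul_of_nonneg_right hρ (hE.trans' (sq_nonneg _)),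
      mul_le_mul_of_nonneg_left hE (mul_nonneg (by linarith : 0 ≤ c - 1) hτ)]
  have htele := weighted_telescope (a := fun k => bdf2Energy (e k) (e (k - 1)))
    (b := fun k => 4 * τ * η * ν k) (c := fun k => 4 * τ * s k) hρ0 n hdecay
  simp only [Nat.add_sub_cancel, Nat.sub_self, mul_left_comm _ (4 * τ * η),
    mul_left_comm _ (4 * τ), ← mul_sum] at htele
  have hlast : ρ ^ n * ‖e (n + 1)‖ ^ 2 ≤ 3 * (ρ ^ (n + 1) * bdf2Energy (e (n + 1)) (e n)) := by
    have hE := sq_norm_le_bdf2Energy (e (n + 1)) (e n)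
    rw [pow_succ ρ n]
    nlinarith [mul_le_mul_of_nonneg_left hE (pow_nonneg hρ0 n),
      mul_le_mul_of_nonneg_left hρ3 (mul_nonneg (pow_nonneg hρ0 n) ((sq_nonneg _).trans hE))]
  have hfirst : ρ * bdf2Energy (e 1) (e 0) ≤ 9 * (‖e 1‖ ^ 2 + ‖e 0‖ ^ 2) := by
    have hE := sq_norm_le_bdf2Energy (e 1) (e 0)
    have hρ1 : ρ ≤ 1 := hρ.trans (by nlinarith)
    nlinarith [bdf2Energy_le (e 1) (e 0), mul_le_mul_of_nonneg_right hρ1 ((sq_nonneg _).trans hE)]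
  have hνsum : 0 ≤ τ * η * ∑ k ∈ Icc 1 n, ρ ^ k * ν k :=
    mul_nonneg (mul_nonneg hτ hη) (sum_nonneg fun k _ => mul_nonneg (pow_nonneg hρ0 k) (hν k))
  have hssum : 0 ≤ τ * ∑ k ∈ Icc 1 n, ρ ^ k * s k :=
    mul_nonneg hτ (sum_nonneg fun k _ => mul_nonneg (pow_nonneg hρ0 k) (hs k))
  linarith

end Energy

lemma sub_mul_sub_nonpos_of_min_eq_zero_s12 {a b a' b' : ℝ} (h : min a b = 0) (h' : min a' b' = 0) :
    (b' - b) * (a' - a) ≤ 0 := by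
  rcases min_eq_iff.mp h with ⟨rfl, hb⟩ | ⟨rfl, ha⟩ <;>
    rcases min_eq_iff.mp h' with ⟨rfl, hb'⟩ | ⟨rfl, ha'⟩ <;> nlinarith

section Obstacle

variable {ι : Type*} [Fintype ι]

lemma EuclideanSpace.real_norm_toLp_sq (x : ι → ℝ) : ‖toLp 2 x‖ ^ 2 = ∑ i, x i ^ 2 := by
  simp [EuclideanSpace.real_norm_sq_eq]

lemma EuclideanSpace.real_inner_toLp_toLp (x y : ι → ℝ) :
    ⟪toLp 2 x, toLp 2 y⟫ = ∑ i, x i * y i := by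
  simp [EuclideanSpace.inner_toLp_toLp, dotProduct, mul_comm]

lemma inner_toLp_sub_nonpos_of_min_eq_zero {a b a' b' : ι → ℝ} (h : ∀ i, min (a i) (b i) = 0)
    (h' : ∀ i, min (a' i) (b' i) = 0) : ⟪toLp 2 (b' - b), toLp 2 (a' - a)⟫ ≤ 0 := by
  rw [EuclideanSpace.real_inner_toLp_toLp]
  exact sum_nonpos fun i _ => sub_mul_sub_nonpos_of_min_eq_zero_s12 (h i) (h' i)

variable [DecidableEq ι]

lemma bdf2_obstacle_energy_step {A : Matrix ι ι ℝ} {τ η γ ν : ℝ} (hτ : 0 ≤ τ)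
    {u₀ u₁ u₂ v₀ v₁ v₂ c g ε : ι → ℝ}
    (hcoer : η * ν - γ * ∑ i, (v₂ - u₂) i ^ 2 ≤ ∑ i, (v₂ - u₂) i * A.mulVec (v₂ - u₂) i)
    (hu : ∀ i, min (((1 + (2 * τ / 3) • A).mulVec u₂ - (4 / 3 : ℝ) • u₁ + (1 / 3 : ℝ) • u₀ + c) i)
      ((u₂ - g) i) = 0)
    (hv : ∀ i, min (((1 + (2 * τ / 3) • A).mulVec v₂ - (4 / 3 : ℝ) • v₁ + (1 / 3 : ℝ) • v₀ + c
      - (2 * τ / 3) • ε) i) ((v₂ - g) i) = 0) :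
    bdf2Energy (toLp 2 (v₂ - u₂)) (toLp 2 (v₁ - u₁)) + 4 * τ * η * ν ≤
      bdf2Energy (toLp 2 (v₁ - u₁)) (toLp 2 (v₀ - u₀))
        + (1 + 4 * γ) * τ * ‖toLp 2 (v₂ - u₂)‖ ^ 2 + 4 * τ * ‖toLp 2 ε‖ ^ 2 := by
  have hcompl := inner_toLp_sub_nonpos_of_min_eq_zero hu hv
  have hresidual : ((1 + (2 * τ / 3) • A).mulVec v₂ - (4 / 3 : ℝ) • v₁ + (1 / 3 : ℝ) • v₀ + c
        - (2 * τ / 3) • ε)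
        - ((1 + (2 * τ / 3) • A).mulVec u₂ - (4 / 3 : ℝ) • u₁ + (1 / 3 : ℝ) • u₀ + c) =
      (v₂ - u₂) - (4 / 3 : ℝ) • (v₁ - u₁) + (1 / 3 : ℝ) • (v₀ - u₀)
        + (2 * τ / 3) • (A.mulVec (v₂ - u₂) - ε) := by
    simp only [Matrix.add_mulVec, Matrix.one_mulVec, Matrix.smul_mulVec, Matrix.mulVec_sub]
    module
  rw [sub_sub_sub_cancel_right, hresidual] at hcompl
  refine bdf2Energy_step (A := fun x => toLp 2 (A.mulVec (ofLp x))) hτ ?_ ?_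
  · simpa only [ofLp_toLp, EuclideanSpace.real_norm_toLp_sq,
      EuclideanSpace.real_inner_toLp_toLp] using hcoer
  · simpa only [ofLp_toLp, toLp_sub, toLp_add, toLp_smul] using hcompl

end Obstacle

/-- Unconditional `L²` stability estimate for the BDF2
obstacle scheme: if `A` satisfies the coercivity estimate
`⟨e, Ae⟩ ≥ η N(e/h)² − γ ‖e‖₂²`, then with `γ̄ = 2 + 4γ`, `t_n = nτ`, there are
`τ₀ > 0` and `C₁ ≥ 0` (depending only on `η, γ`) such that the solutions of the
BDF2 obstacle scheme and of its perturbation by `ε̄ⁿ` satisfy, with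
`eⁿ = vⁿ − uⁿ`,
`e^{−γ̄ t_n} ‖e^{n+1}‖₂² + τη Σ_{k=1}^n e^{−γ̄ t_k} N(e^{k+1}/h)²
   ≤ C₁(‖e⁰‖₂² + ‖e¹‖₂² + τ Σ_{k=1}^n e^{−γ̄ t_k} ‖ε̄ᵏ‖₂²)`. -/
theorem bdf2_obstacle_stability
    (η γ : ℝ) (hη : 0 < η) (hγ : 0 ≤ γ) :
    ∃ τ₀ : ℝ, 0 < τ₀ ∧ ∃ C₁ : ℝ, 0 ≤ C₁ ∧
      ∀ (J : ℕ), 1 ≤ J → ∀ (h : ℝ), 0 < h → ∀ (T : ℝ), 0 < T →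
      ∀ A : Matrix (Fin J) (Fin J) ℝ,
        (∀ e : Fin J → ℝ,
          η * Nsq J (fun i => e i / h) - γ * ∑ i, (e i)^2 ≤ ∑ i, e i * A.mulVec e i) →
      ∀ τ : ℝ, 0 < τ → τ ≤ τ₀ →
      ∀ N : ℕ, 2 ≤ N → (N : ℝ) * τ ≤ T →
      ∀ u v g c ε : ℕ → Fin J → ℝ,
        (∀ n, 1 ≤ n → n ≤ N - 1 → ∀ j,
          min ((((1 : Matrix (Fin J) (Fin J) ℝ) + (2*τ/3) • A).mulVec (u (n+1))
              - (4/3 : ℝ) • u n + (1/3 : ℝ) • u (n-1) + c (n+1)) j)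
            ((u (n+1) - g (n+1)) j) = 0) →
        (∀ n, 1 ≤ n → n ≤ N - 1 → ∀ j,
          min ((((1 : Matrix (Fin J) (Fin J) ℝ) + (2*τ/3) • A).mulVec (v (n+1))
              - (4/3 : ℝ) • v n + (1/3 : ℝ) • v (n-1) + c (n+1)
              - (2*τ/3) • ε n) j)
            ((v (n+1) - g (n+1)) j) = 0) →
      ∀ n, 1 ≤ n → n ≤ N - 1 →
        Real.exp (-(2 + 4*γ) * ((n : ℝ) * τ)) * ∑ j, ((v (n+1) - u (n+1)) j)^2
          + τ * η * ∑ k ∈ Finset.Icc 1 n,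
              Real.exp (-(2 + 4*γ) * ((k : ℝ) * τ))
                * Nsq J (fun j => (v (k+1) - u (k+1)) j / h)
        ≤ C₁ * (∑ j, ((v 0 - u 0) j)^2 + ∑ j, ((v 1 - u 1) j)^2
            + τ * ∑ k ∈ Finset.Icc 1 n,
                Real.exp (-(2 + 4*γ) * ((k : ℝ) * τ)) * ∑ j, (ε k j)^2) := by
  refine ⟨1 / (2 + 4 * γ) ^ 2, by positivity, 27, by norm_num, ?_⟩
  intro J _ h _ T _ A hA τ hτ hττ N _ _ u v g c ε hu hv n _ hnN
  have hcτ : (2 + 4 * γ) ^ 2 * τ ≤ 1 := by rwa [le_div_iff₀' (by positivity)] at hττ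
  have hbound := bdf2_weighted_energy_bound (e := fun k => toLp 2 (v k - u k))
    (ν := fun k => Nsq J fun j => (v (k + 1) - u (k + 1)) j / h)
    (s := fun k => ‖toLp 2 (ε k)‖ ^ 2) (by linarith) hτ.le hcτ hη.le
    (fun k => Nsq_nonneg J _) (fun k => sq_nonneg _) n fun k hk => by
      have hkN : k ≤ N - 1 := (mem_Icc.1 hk).2.trans hnN
      refine (bdf2_obstacle_energy_step hτ.le (hA _) (hu k (mem_Icc.1 hk).1 hkN)
        (hv k (mem_Icc.1 hk).1 hkN)).trans_eq ?_
      ring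
  have hweight (k : ℕ) :
      Real.exp (-(2 + 4 * γ) * ((k : ℝ) * τ)) = Real.exp (-((2 + 4 * γ) * τ)) ^ k := by
    rw [← Real.exp_nat_mul]
    ring_nf
  simpa only [hweight, EuclideanSpace.real_norm_toLp_sq] using hbound
end
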